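/- arXiv:2203.06417 — 10 statements merged into one kernel-verified Lean document; each statement's English description precedes it below -/
import Mathlib

section
/- Let R ⊆ X_n = {1,…,n} be a nonempty set with |R| = p and max R − min R = q. Then the number of order-preserving partial injective contractions α of X_n with im α = R equals C(n−q+p−1, p). -/
/-- `f` is a partial injective transformation (injectivity on its domain). -/
def PInj {n : ℕ} (f : Fin n → Option (Fin n)) : Prop :=
  ∀ x y a, f x = some a → f y = some a → x = y

/-- `f` is a contraction: `|xα - yα| ≤ |x - y|` for all `x, y` in the domain. -/
def Contr {n : ℕ} (f : Fin n → Option (Fin n)) : Prop :=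
  ∀ x y a b, f x = some a → f y = some b →
    |(a.val : ℤ) - (b.val : ℤ)| ≤ |(x.val : ℤ) - (y.val : ℤ)|

/-- `f` is order-preserving on its domain. -/
def OrdPres {n : ℕ} (f : Fin n → Option (Fin n)) : Prop :=
  ∀ x y a b, f x = some a → f y = some b → x ≤ y → a ≤ b

/-- `f` is order-reversing on its domain. -/
def OrdRev {n : ℕ} (f : Fin n → Option (Fin n)) : Prop :=
  ∀ x y a b, f x = some a → f y = some b → x ≤ y → b ≤ a

/-- `f` is order-decreasing on its domain. -/
def OrdDecr {n : ℕ} (f : Fin n → Option (Fin n)) : Prop :=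
  ∀ x a, f x = some a → a ≤ x

/-- The image set of the partial map `f`. -/
def pim {n : ℕ} (f : Fin n → Option (Fin n)) : Finset (Fin n) :=
  Finset.univ.filter (fun b => ∃ x, f x = some b)

/-- The domain set of the partial map `f`. -/
def pdom {n : ℕ} (f : Fin n → Option (Fin n)) : Finset (Fin n) :=
  Finset.univ.filter (fun x => (f x).isSome)

/-- The height (rank) of the partial map `f`: the size of its image. -/
def pheight {n : ℕ} (f : Fin n → Option (Fin n)) : ℕ := (pim f).card

/-- The number of fixed points of the partial map `f`. -/
def pfix {n : ℕ} (f : Fin n → Option (Fin n)) : ℕ :=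
  (Finset.univ.filter (fun x => f x = some x)).card

/-!
An order-preserving partial injection with image `R = {r₀ < ⋯ < r_{p-1}}` is determined by its
domain `{d₀ < ⋯ < d_{p-1}}`, via `dᵢ ↦ rᵢ`, and it is a contraction iff each gap of the domain is
at least the corresponding gap of `R`, i.e. iff `i ↦ dᵢ - rᵢ` is monotone. Subtracting from `dᵢ`
the number `rᵢ - r₀ - i` of holes of `R` below `rᵢ` turns these domains bijectively into the
`p`-subsets of `{0, …, n - q + p - 2}`.
-/

open Finset Function

lemma mem_pim {n : ℕ} {f : Fin n → Option (Fin n)} {b : Fin n} :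
    b ∈ pim f ↔ ∃ x, f x = some b := by
  simp [pim]

section PartialOfEmbeddings

variable {n p : ℕ} (d r : Fin p ↪o Fin n)

noncomputable def partialOfEmb : Fin n → Option (Fin n) :=
  extend d (fun i => some (r i)) (fun _ => none)

@[simp]
lemma partialOfEmb_apply (i : Fin p) : partialOfEmb d r (d i) = some (r i) :=
  d.injective.extend_apply _ _ i

lemma partialOfEmb_eq_none {x : Fin n} (hx : ¬∃ i, d i = x) : partialOfEmb d r x = none :=
  extend_apply' _ _ _ hx

lemma partialOfEmb_eq_some_iff {x a : Fin n} :
    partialOfEmb d r x = some a ↔ ∃ i, d i = x ∧ r i = a := by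
  by_cases hx : ∃ i, d i = x
  · obtain ⟨i, rfl⟩ := hx
    simp [eq_comm (a := r _)]
  · simp only [partialOfEmb_eq_none d r hx, reduceCtorEq, false_iff]
    exact fun ⟨i, hi, _⟩ => hx ⟨i, hi⟩

lemma pInj_partialOfEmb : PInj (partialOfEmb d r) := by
  intro x y a hx hy
  obtain ⟨i, rfl, rfl⟩ := (partialOfEmb_eq_some_iff d r).1 hx
  obtain ⟨j, rfl, hj⟩ := (partialOfEmb_eq_some_iff d r).1 hy
  rw [r.injective hj]

lemma ordPres_partialOfEmb : OrdPres (partialOfEmb d r) := by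
  intro x y a b hx hy hxy
  obtain ⟨i, rfl, rfl⟩ := (partialOfEmb_eq_some_iff d r).1 hx
  obtain ⟨j, rfl, rfl⟩ := (partialOfEmb_eq_some_iff d r).1 hy
  exact r.monotone (d.le_iff_le.1 hxy)

lemma pim_partialOfEmb : pim (partialOfEmb d r) = image r univ := by
  ext a
  simp [pim, partialOfEmb_eq_some_iff]

lemma contr_partialOfEmb_iff : Contr (partialOfEmb d r) ↔ Monotone fun i => (d i : ℤ) - r i := by
  have key : ∀ i j, i ≤ j →
      (|(r i : ℤ) - r j| ≤ |(d i : ℤ) - d j| ↔ (d i : ℤ) - r i ≤ (d j : ℤ) - r j) := by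
    intro i j hij
    have hr : (r i : ℤ) ≤ r j := by exact_mod_cast r.monotone hij
    have hd : (d i : ℤ) ≤ d j := by exact_mod_cast d.monotone hij
    rw [abs_of_nonpos (by omega), abs_of_nonpos (by omega)]
    omega
  constructor
  · intro h i j hij
    exact (key i j hij).1 (h _ _ _ _ (partialOfEmb_apply d r i) (partialOfEmb_apply d r j))
  · intro h x y a b hx hy
    obtain ⟨i, rfl, rfl⟩ := (partialOfEmb_eq_some_iff d r).1 hx
    obtain ⟨j, rfl, rfl⟩ := (partialOfEmb_eq_some_iff d r).1 hy
    rcases le_total i j with hij | hji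
    · exact (key i j hij).2 (h hij)
    · rw [abs_sub_comm, abs_sub_comm (d i : ℤ)]
      exact (key j i hji).2 (h hji)

lemma partialOfEmb_left_injective : Injective fun d : Fin p ↪o Fin n => partialOfEmb d r := by
  intro d d' h
  ext i
  obtain ⟨j, hj, hji⟩ := (partialOfEmb_eq_some_iff d' r).1 ((congrFun h (d i)).symm.trans
    (partialOfEmb_apply d r i))
  rw [← hj, r.injective hji]

variable {r} in
lemma exists_eq_partialOfEmb {f : Fin n → Option (Fin n)} (hinj : PInj f) (hord : OrdPres f)
    (him : pim f = image r univ) : ∃ d : Fin p ↪o Fin n, f = partialOfEmb d r := by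
  have hpre : ∀ i, ∃ x, f x = some (r i) := fun i =>
    mem_pim.1 (him ▸ mem_image_of_mem r (mem_univ i))
  choose x hx using hpre
  have hxmono : StrictMono x := fun i j hij => lt_of_not_ge fun hji =>
    (r.lt_iff_lt.2 hij).not_ge (hord _ _ _ _ (hx j) (hx i) hji)
  refine ⟨OrderEmbedding.ofStrictMono x hxmono, funext fun y => ?_⟩
  by_cases hy : ∃ i, x i = y
  · obtain ⟨i, rfl⟩ := hy
    exact (hx i).trans (partialOfEmb_apply (OrderEmbedding.ofStrictMono x hxmono) r i).symm
  · rw [partialOfEmb_eq_none _ r hy]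
    cases hfy : f y with
    | none => rfl
    | some a =>
      obtain ⟨i, -, rfl⟩ := mem_image.1 (him ▸ mem_pim.2 ⟨y, hfy⟩)
      exact absurd ⟨i, hinj _ _ _ (hx i) hfy⟩ hy

end PartialOfEmbeddings

lemma card_oci_with_image_eq_card_monotone_sub {n p : ℕ} (r : Fin p ↪o Fin n) :
    Nat.card {f : Fin n → Option (Fin n) //
        PInj f ∧ Contr f ∧ OrdPres f ∧ pim f = image r univ} =
      Nat.card {d : Fin p ↪o Fin n // Monotone fun i => (d i : ℤ) - r i} := by
  symm
  refine Nat.card_eq_of_bijective (fun d => ⟨partialOfEmb d r, pInj_partialOfEmb d r,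
    (contr_partialOfEmb_iff d r).2 d.2, ordPres_partialOfEmb d r, pim_partialOfEmb d r⟩) ⟨?_, ?_⟩
  · intro d d' h
    exact Subtype.ext (partialOfEmb_left_injective r (congrArg Subtype.val h))
  · rintro ⟨f, hinj, hcontr, hord, him⟩
    obtain ⟨d, rfl⟩ := exists_eq_partialOfEmb hinj hord him
    exact ⟨⟨d, (contr_partialOfEmb_iff d r).1 hcontr⟩, rfl⟩

section Holes

variable {n k : ℕ} (r : Fin (k + 1) ↪o Fin n)

def holes (i : Fin (k + 1)) : ℕ := r i - r 0 - i

lemma val_apply_zero_add_le (i : Fin (k + 1)) : (r 0 : ℕ) + i ≤ r i := by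
  induction i using Fin.induction with
  | zero => simp
  | succ i ih =>
    have hlt := r.lt_iff_lt.2 i.castSucc_lt_succ
    rw [Fin.lt_def] at hlt
    rw [Fin.val_castSucc] at ih
    rw [Fin.val_succ]
    omega

lemma holes_zero : holes r 0 = 0 := by simp [holes]

lemma monotone_holes : Monotone (holes r) := by
  refine Fin.monotone_iff_le_succ.2 fun i => ?_
  have hlt := r.lt_iff_lt.2 i.castSucc_lt_succ
  have hle := val_apply_zero_add_le r i.castSucc
  rw [Fin.lt_def] at hlt
  rw [Fin.val_castSucc] at hle
  rw [holes, holes, Fin.val_succ, Fin.val_castSucc]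
  omega

lemma monotone_sub_iff_strictMono_sub_holes (v : Fin (k + 1) → ℤ) :
    (Monotone fun i => v i - r i) ↔ StrictMono fun i => v i - holes r i := by
  rw [Fin.monotone_iff_le_succ, Fin.strictMono_iff_lt_succ]
  refine forall_congr' fun i => ?_
  have hle := val_apply_zero_add_le r i.castSucc
  have hle' := val_apply_zero_add_le r i.succ
  rw [Fin.val_castSucc] at hle
  rw [Fin.val_succ] at hle'
  simp only [holes, Fin.val_succ, Fin.val_castSucc]
  omega

end Holes

section Shift

variable {k m N : ℕ} {u : Fin (k + 1) → ℕ}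

lemma le_of_strictMono_sub (hu0 : u 0 = 0) {d : Fin (k + 1) → Fin N}
    (hd : StrictMono fun i => (d i : ℤ) - u i) (i : Fin (k + 1)) : u i ≤ d i := by
  have := hd.monotone (Fin.zero_le i)
  simp only [hu0] at this
  omega

def shiftDown (hu0 : u 0 = 0) (hN : m + u (Fin.last k) = N) (d : Fin (k + 1) ↪o Fin N)
    (hd : StrictMono fun i => (d i : ℤ) - u i) : Fin (k + 1) ↪o Fin m :=
  OrderEmbedding.ofStrictMono
    (fun i => ⟨d i - u i, by
      have := hd.monotone (Fin.le_last i)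
      have := le_of_strictMono_sub hu0 hd i
      have := (d (Fin.last k)).isLt
      omega⟩)
    (fun i j hij => by
      have := hd hij
      simp only at this
      have := le_of_strictMono_sub hu0 hd i
      have := le_of_strictMono_sub hu0 hd j
      rw [Fin.mk_lt_mk]
      omega)

def shiftUp (hu : Monotone u) (hN : m + u (Fin.last k) = N) (s : Fin (k + 1) ↪o Fin m) :
    Fin (k + 1) ↪o Fin N :=
  OrderEmbedding.ofStrictMono
    (fun i => ⟨s i + u i, by
      have := hu (Fin.le_last i)
      have := (s i).isLt
      omega⟩)
    (fun _ _ hij => Nat.add_lt_add_of_lt_of_le (s.lt_iff_lt.2 hij) (hu hij.le))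

lemma val_shiftDown_apply (hu0 : u 0 = 0) (hN : m + u (Fin.last k) = N)
    (d : Fin (k + 1) ↪o Fin N) (hd : StrictMono fun i => (d i : ℤ) - u i) (i : Fin (k + 1)) :
    (shiftDown hu0 hN d hd i : ℕ) = d i - u i :=
  rfl

lemma val_shiftUp_apply (hu : Monotone u) (hN : m + u (Fin.last k) = N)
    (s : Fin (k + 1) ↪o Fin m) (i : Fin (k + 1)) : (shiftUp hu hN s i : ℕ) = s i + u i :=
  rfl

lemma strictMono_shiftUp_sub (hu : Monotone u) (hN : m + u (Fin.last k) = N)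
    (s : Fin (k + 1) ↪o Fin m) : StrictMono fun i => (shiftUp hu hN s i : ℤ) - u i := by
  intro i j hij
  simpa [val_shiftUp_apply] using s.lt_iff_lt.2 hij

def shiftEquiv (hu : Monotone u) (hu0 : u 0 = 0) (hN : m + u (Fin.last k) = N) :
    {d : Fin (k + 1) ↪o Fin N // StrictMono fun i => (d i : ℤ) - u i} ≃ (Fin (k + 1) ↪o Fin m) where
  toFun d := shiftDown hu0 hN d.1 d.2
  invFun s := ⟨shiftUp hu hN s, strictMono_shiftUp_sub hu hN s⟩
  left_inv d := by
    ext i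
    have := le_of_strictMono_sub hu0 d.2 i
    rw [val_shiftUp_apply, val_shiftDown_apply]
    omega
  right_inv s := by
    ext i
    rw [val_shiftDown_apply, val_shiftUp_apply, Nat.add_sub_cancel]

end Shift

lemma card_orderEmbedding_fin (p m : ℕ) : Nat.card (Fin p ↪o Fin m) = m.choose p := by
  rw [Nat.card_congr Set.powersetCard.ofFinEmbEquiv, Set.powersetCard.card, Nat.card_fin]

/-- The number of order-preserving partial injective contractions with a given
nonempty image `R` of size `p` and spread `q = max R - min R` is `C(n-q+p-1, p)`. -/
theorem count_with_given_image (n p q : ℕ) (R : Finset (Fin n)) (hR : R.Nonempty)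
    (hcard : R.card = p) (hq : (R.max' hR).val - (R.min' hR).val = q) :
    Nat.card {f : Fin n → Option (Fin n) //
        PInj f ∧ Contr f ∧ OrdPres f ∧ pim f = R} =
      (n - q + p - 1).choose p := by
  obtain ⟨k, rfl⟩ : ∃ k, p = k + 1 := Nat.exists_eq_add_one.2 (hcard ▸ hR.card_pos)
  set r := R.orderEmbOfFin hcard
  have hspread : (r (Fin.last k) : ℕ) - r 0 = q := by
    rw [← hq, ← R.orderEmbOfFin_zero hcard k.succ_pos, ← R.orderEmbOfFin_last hcard k.succ_pos]
    rfl
  have hN : n - q + k + holes r (Fin.last k) = n := by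
    have hlt := (r (Fin.last k)).isLt
    have hle := val_apply_zero_add_le r (Fin.last k)
    rw [Fin.val_last] at hle
    rw [holes, Fin.val_last]
    omega
  rw [← R.image_orderEmbOfFin_univ hcard, card_oci_with_image_eq_card_monotone_sub,
    Nat.card_congr (Equiv.subtypeEquivRight fun d => monotone_sub_iff_strictMono_sub_holes r _),
    Nat.card_congr (shiftEquiv (monotone_holes r) (holes_zero r) hN), card_orderEmbedding_fin,
    Nat.add_succ_sub_one]
end

section
/- Let R, S ⊆ X_n = {1,…,n} be nonempty sets with |R| = |S| and max R − min R = max S − min S. Then the number of order-preserving partial injective contractions α of X_n with im α = R equals the number of order-preserving partial injective contractions α of X_n with im α = S. -/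
/-!
An order-preserving partial injective contraction `α` with image `R = {r₁ < ⋯ < r_k}` is
determined by the preimages `d₁ < ⋯ < d_k` of the `rᵢ`, and the three defining conditions say
exactly that `dᵢ₊₁ - dᵢ ≥ rᵢ₊₁ - rᵢ`. Equivalently, the slacks `tᵢ = dᵢ - (rᵢ - min R)` form a nondecreasing
sequence in `[0, n - (max R - min R))`. So these maps correspond bijectively to the monotone maps
`R → Fin (n - (max R - min R))`, whose number depends only on `|R|` and `max R - min R`.
-/

namespace OCI

variable {n : ℕ}

def InverseExpands (f : Fin n → Option (Fin n)) : Prop :=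
  ∀ x y a b, f x = some a → f y = some b → a ≤ b → (b.val : ℤ) - a.val ≤ (y.val : ℤ) - x.val

theorem inverseExpands_iff {f : Fin n → Option (Fin n)} :
    InverseExpands f ↔ PInj f ∧ Contr f ∧ OrdPres f := by
  constructor
  · intro hf
    refine ⟨fun x y a hx hy => ?_, fun x y a b hx hy => ?_, fun x y a b hx hy hxy => ?_⟩
    · have := hf x y a a hx hy le_rfl
      have := hf y x a a hy hx le_rfl
      omega
    · rcases le_total a b with hab | hba
      · have := hf x y a b hx hy hab
        rw [abs_sub_comm, abs_of_nonneg (by omega), abs_sub_comm, abs_of_nonneg (by omega)]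
        exact this
      · have := hf y x b a hy hx hba
        rw [abs_of_nonneg (by omega), abs_of_nonneg (by omega)]
        exact this
    · by_contra! hba
      have := hf y x b a hy hx hba.le
      omega
  · rintro ⟨hI, hC, hO⟩ x y a b hx hy hab
    have hxy : x ≤ y := by
      by_contra! hyx
      have hba := hO y x b a hy hx hyx.le
      exact hyx.ne (hI y x a (le_antisymm hab hba ▸ hy) hx)
    have := hC x y a b hx hy
    rwa [abs_sub_comm, abs_of_nonneg (by omega), abs_sub_comm, abs_of_nonneg (by omega)] at this

def spread (R : Finset (Fin n)) (hR : R.Nonempty) : ℕ := (R.max' hR).val - (R.min' hR).val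

variable {R : Finset (Fin n)} {hR : R.Nonempty}

/-- `t a` is the slack of `a`: how far its preimage lies beyond `a - min R`, the least position
compatible with the image `R`. -/
def place (t : R →o Fin (n - spread R hR)) (a : R) : Fin n :=
  ⟨t a + (a.val.val - (R.min' hR).val), by
    have := (t a).isLt
    have : a.val ≤ R.max' hR := R.le_max' _ a.2
    have := (R.max' hR).isLt
    unfold spread at *
    omega⟩

theorem val_place (t : R →o Fin (n - spread R hR)) (a : R) :
    (place t a).val = t a + (a.val.val - (R.min' hR).val) := rfl

theorem place_sub_place_ge (t : R →o Fin (n - spread R hR)) {a b : R} (hab : a ≤ b) :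
    (b.val.val : ℤ) - a.val.val ≤ (place t b).val - (place t a).val := by
  have := t.monotone hab
  have : R.min' hR ≤ a.val := R.min'_le _ a.2
  rw [Subtype.mk_le_mk] at hab
  simp only [val_place, Fin.le_def] at *
  omega

theorem place_strictMono (t : R →o Fin (n - spread R hR)) : StrictMono (place t) := by
  intro a b hab
  have := place_sub_place_ge t hab.le
  rw [Subtype.mk_lt_mk, Fin.lt_def] at hab
  rw [Fin.lt_def]
  omega

noncomputable def ofSlack (t : R →o Fin (n - spread R hR)) : Fin n → Option (Fin n) :=
  fun y => (Function.partialInv (place t) y).map Subtype.val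

theorem ofSlack_eq_some {t : R →o Fin (n - spread R hR)} {y a : Fin n} :
    ofSlack t y = some a ↔ ∃ h : a ∈ R, place t ⟨a, h⟩ = y := by
  rw [ofSlack, Option.map_eq_some_iff]
  constructor
  · rintro ⟨⟨a, h⟩, hinv, rfl⟩
    exact ⟨h, (place_strictMono t).injective.isPartialInv _ _ |>.mp hinv⟩
  · rintro ⟨h, hy⟩
    exact ⟨⟨a, h⟩, (place_strictMono t).injective.isPartialInv _ _ |>.mpr hy, rfl⟩

theorem inverseExpands_ofSlack (t : R →o Fin (n - spread R hR)) : InverseExpands (ofSlack t) := by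
  intro x y a b hx hy hab
  obtain ⟨ha, rfl⟩ := ofSlack_eq_some.mp hx
  obtain ⟨hb, rfl⟩ := ofSlack_eq_some.mp hy
  exact place_sub_place_ge t (Subtype.mk_le_mk.mpr hab)

theorem mem_pim {f : Fin n → Option (Fin n)} {a : Fin n} : a ∈ pim f ↔ ∃ x, f x = some a := by
  simp [pim]

theorem pim_ofSlack (t : R →o Fin (n - spread R hR)) : pim (ofSlack t) = R := by
  ext a
  simp only [mem_pim, ofSlack_eq_some]
  exact ⟨fun ⟨_, h, _⟩ => h, fun h => ⟨_, h, rfl⟩⟩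

theorem ofSlack_injective : Function.Injective (ofSlack (R := R) (hR := hR)) := by
  intro t t' h
  have hplace : place t = place t' := by
    funext a
    have : ofSlack t' (place t a) = some a.val := h ▸ ofSlack_eq_some.mpr ⟨a.2, rfl⟩
    exact (ofSlack_eq_some.mp this).2.symm
  ext a
  have := congrArg (fun g => (g a).val) hplace
  simp only [val_place] at this
  omega

theorem exists_ofSlack_eq {f : Fin n → Option (Fin n)} (hf : InverseExpands f) (him : pim f = R) :
    ∃ t : R →o Fin (n - spread R hR), ofSlack t = f := by
  have hpre (a : R) : ∃ x, f x = some a.val := mem_pim.mp (him ▸ a.2)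
  choose p hp using hpre
  have hgap {a b : R} (hab : a ≤ b) : (b.val.val : ℤ) - a.val.val ≤ (p b).val - (p a).val :=
    hf _ _ _ _ (hp a) (hp b) hab
  let amin : R := ⟨R.min' hR, R.min'_mem hR⟩
  let amax : R := ⟨R.max' hR, R.max'_mem hR⟩
  have hp_min (a : R) : (a.val.val : ℤ) - (R.min' hR).val ≤ (p a).val - (p amin).val :=
    hgap (R.min'_le _ a.2)
  have hp_max (a : R) : ((R.max' hR).val : ℤ) - a.val.val ≤ (p amax).val - (p a).val :=
    hgap (R.le_max' _ a.2)
  let t : R →o Fin (n - spread R hR) :=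
    { toFun a := ⟨(p a).val + (R.min' hR).val - a.val.val, by
        have := hp_max a; have := (p amax).isLt; have := (R.max' hR).isLt
        have := R.min'_le _ (R.max'_mem hR); unfold spread; omega⟩
      monotone' a b hab := by
        have := hgap hab; rw [Fin.le_def]; dsimp only; omega }
  have hplace : place t = p := by
    funext a
    have := hp_min a
    have : (R.min' hR).val ≤ a.val.val := R.min'_le _ a.2
    ext
    change (p a).val + _ - _ + (_ - _) = _
    omega
  refine ⟨t, funext fun y => Option.ext fun a => ?_⟩
  rw [ofSlack_eq_some, hplace]
  constructor
  · rintro ⟨ha, rfl⟩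
    exact hp _
  · intro hy
    have ha : a ∈ R := him ▸ mem_pim.mpr ⟨y, hy⟩
    exact ⟨ha, (inverseExpands_iff.mp hf).1 _ _ _ (hp ⟨a, ha⟩) hy⟩

noncomputable def orderHomEquiv (hR : R.Nonempty) :
    (R →o Fin (n - spread R hR)) ≃ {f : Fin n → Option (Fin n) // InverseExpands f ∧ pim f = R} :=
  Equiv.ofBijective (fun t => ⟨ofSlack t, inverseExpands_ofSlack t, pim_ofSlack t⟩)
    ⟨fun _ _ h => ofSlack_injective (congrArg Subtype.val h),
     fun f => (exists_ofSlack_eq f.2.1 f.2.2).imp fun _ ht => Subtype.ext ht⟩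

theorem card_eq_card_orderHom (hR : R.Nonempty) :
    Nat.card {f : Fin n → Option (Fin n) // PInj f ∧ Contr f ∧ OrdPres f ∧ pim f = R} =
      Nat.card (R →o Fin (n - spread R hR)) := by
  refine Nat.card_congr ((Equiv.subtypeEquivRight fun f => ?_).trans (orderHomEquiv hR).symm)
  rw [inverseExpands_iff, and_assoc, and_assoc]

end OCI

/-- Two nonempty image sets with the same cardinality and the same spread
(`max - min`) admit the same number of order-preserving partial injective
contractions having them as image. -/
theorem count_depends_only_on_card_and_spread (n : ℕ) (R S : Finset (Fin n))
    (hR : R.Nonempty) (hS : S.Nonempty) (hcard : R.card = S.card)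
    (hspread : (R.max' hR).val - (R.min' hR).val
      = (S.max' hS).val - (S.min' hS).val) :
    Nat.card {f : Fin n → Option (Fin n) //
        PInj f ∧ Contr f ∧ OrdPres f ∧ pim f = R} =
    Nat.card {f : Fin n → Option (Fin n) //
        PInj f ∧ Contr f ∧ OrdPres f ∧ pim f = S} := by
  let e : R ≃o S := (R.orderIsoOfFin rfl).symm.trans (S.orderIsoOfFin hcard.symm)
  rw [OCI.card_eq_card_orderHom hR, OCI.card_eq_card_orderHom hS,
    show OCI.spread R hR = OCI.spread S hS from hspread]
  exact Nat.card_congr (e.arrowCongr (OrderIso.refl _)).toEquiv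
end

section
/- Let α ∈ OCI_n, i.e., α is an order-preserving partial injective contraction of X_n = {1,…,n}. Then the set of fixed points of α is convex with respect to dom α: if a, b ∈ dom α satisfy aα = a and bα = b, and x ∈ dom α satisfies a ≤ x ≤ b, then xα = x. -/
/-! Order preservation keeps `xα` between the fixed points `a ≤ x ≤ b`, so the distances
`xα - a ≤ x - a` and `b - xα ≤ b - x` given by contraction force `xα = x`. -/

namespace Contr

variable {n : ℕ} {f : Fin n → Option (Fin n)}

theorem image_le_of_fixed_le (hC : Contr f) (hP : OrdPres f) {a x y : Fin n}
    (ha : f a = some a) (hx : f x = some y) (hax : a ≤ x) : y ≤ x := by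
  have hay : a ≤ y := hP a x a y ha hx hax
  have hdist := hC x a y a hx ha
  rw [Fin.le_iff_val_le_val] at hax hay ⊢
  rw [abs_of_nonneg (by omega), abs_of_nonneg (by omega)] at hdist
  omega

theorem le_image_of_le_fixed (hC : Contr f) (hP : OrdPres f) {b x y : Fin n}
    (hb : f b = some b) (hx : f x = some y) (hxb : x ≤ b) : x ≤ y := by
  have hyb : y ≤ b := hP x b y b hx hb hxb
  have hdist := hC b x b y hb hx
  rw [Fin.le_iff_val_le_val] at hxb hyb ⊢
  rw [abs_of_nonneg (by omega), abs_of_nonneg (by omega)] at hdist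
  omega

end Contr

theorem fixed_points_convex_general (n : ℕ) (f : Fin n → Option (Fin n))
    (hC : Contr f) (hP : OrdPres f)
    (a b x y : Fin n) (ha : f a = some a) (hb : f b = some b)
    (hx : f x = some y) (hax : a ≤ x) (hxb : x ≤ b) :
    f x = some x := by
  rw [hx, le_antisymm (hC.image_le_of_fixed_le hP ha hx hax)
    (hC.le_image_of_le_fixed hP hb hx hxb)]

/-- For an order-preserving partial injective contraction, the set of fixed points
is convex with respect to the domain. -/
theorem fixed_points_convex (n : ℕ) (f : Fin n → Option (Fin n))
    (hI : PInj f) (hC : Contr f) (hP : OrdPres f)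
    (a b x y : Fin n) (ha : f a = some a) (hb : f b = some b)
    (hx : f x = some y) (hax : a ≤ x) (hxb : x ≤ b) :
    f x = some x :=
  fixed_points_convex_general n f hC hP a b x y ha hb hx hax hxb
end

section
/- For every natural number n, the Fibonacci number F_{2n} satisfies F_{2n} = ∑_{p=0}^{n} C(n+p−1, 2p−1), where the p = 0 term is interpreted as 0 (by the convention that C(a,b) = 0 for negative b). -/
/-!
`F_{2n} = F_{(2n-1)+1}` is the sum of the shallow diagonal `∑_k C(2n-1-k, k)` of Pascal's
triangle, whose terms vanish once `k ≥ n`. Substituting `k = n - p` and using the symmetry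
`C(n+p-1, n-p) = C(n+p-1, 2p-1)` gives the stated sum.
-/

open Finset

namespace Nat

theorem fib_succ_eq_sum_range_choose (m : ℕ) :
    fib (m + 1) = ∑ k ∈ range (m / 2 + 1), (m - k).choose k := by
  have h_diagonal : fib (m + 1) = ∑ k ∈ range (m + 1), (m - k).choose k := by
    rw [fib_succ_eq_sum_choose, ← Finset.Nat.sum_antidiagonal_swap]
    exact Finset.Nat.sum_antidiagonal_eq_sum_range_succ (fun a b => b.choose a) m
  rw [h_diagonal]
  refine (sum_subset (range_subset_range.2 (by omega)) fun k _ hk => ?_).symm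
  exact choose_eq_zero_of_lt (by rw [mem_range] at hk; omega)

end Nat

/-- `F_{2n} = ∑_{p=1}^{n} C(n+p-1, 2p-1)` (the `p = 0` term being `0`). -/
theorem fib_even_sum (n : ℕ) :
    Nat.fib (2 * n) = ∑ p ∈ Finset.Icc 1 n, (n + p - 1).choose (2 * p - 1) := by
  obtain _ | q := n
  · simp
  rw [show 2 * (q + 1) = 2 * q + 1 + 1 by ring, Nat.fib_succ_eq_sum_range_choose,
    show (2 * q + 1) / 2 + 1 = q + 1 by omega]
  refine sum_nbij' (fun k => q + 1 - k) (fun p => q + 1 - p) ?_ ?_ ?_ ?_ fun k hk => ?_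
  all_goals simp only [mem_range, mem_Icc] at *
  any_goals intros; omega
  rw [show q + 1 + (q + 1 - k) - 1 = 2 * q + 1 - k by omega]
  exact Nat.choose_symm_of_eq_add (by omega)
end

section
/- Let h_n = |OCI_n| be the number of order-preserving partial injective contractions of X_n = {1,…,n}. Then, as an identity of integers, 5·h_n = (3n−1)·F_{2n} − (n−5)·F_{2n+1}, where F_k denotes the k-th Fibonacci number. -/
open Finset

section Chains

variable {α : Type*} (r : α → α → Prop)

open Classical in
noncomputable def chains (s : Finset α) : Finset (Finset α) :=
  s.powerset.filter fun t => IsChain r (t : Set α)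

variable {r}

theorem mem_chains {s t : Finset α} : t ∈ chains r s ↔ t ⊆ s ∧ IsChain r (t : Set α) := by
  simp [chains]

theorem IsChain.exists_forall_rel_of_finset [IsStrictOrder α r] [DecidableEq α] {t : Finset α}
    (ht : IsChain r (t : Set α)) (hne : t.Nonempty) : ∃ m ∈ t, ∀ x ∈ t, x ≠ m → r x m := by
  induction t using Finset.induction_on with
  | empty => simp at hne
  | insert a t ha ih =>
    rw [coe_insert] at ht
    obtain rfl | htne := t.eq_empty_or_nonempty
    · exact ⟨a, by simp⟩
    obtain ⟨m, hm, hmax⟩ := ih (ht.mono (Set.subset_insert _ _)) htne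
    have ham : a ≠ m := ne_of_mem_of_not_mem hm ha |>.symm
    rcases ht (Set.mem_insert _ _) (Set.mem_insert_of_mem _ hm) ham with ham' | hma
    · refine ⟨m, mem_insert_of_mem hm, fun x hx hxm => ?_⟩
      rcases mem_insert.mp hx with rfl | hx
      exacts [ham', hmax x hx hxm]
    · refine ⟨a, mem_insert_self _ _, fun x hx hxa => ?_⟩
      rcases mem_insert.mp hx with rfl | hx
      · exact absurd rfl hxa
      obtain rfl | hxm := eq_or_ne x m
      exacts [hma, _root_.trans (hmax x hx hxm) hma]

open Classical in
/-- A nonempty chain is its greatest element inserted into a chain strictly below it. -/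
theorem chains_eq_insert_biUnion [IsStrictOrder α r] [DecidableRel r] (s : Finset α) :
    chains r s = insert ∅ (s.biUnion fun q => (chains r (s.filter (r · q))).image (insert q)) := by
  ext t
  simp only [mem_insert, mem_biUnion, mem_image, mem_chains]
  constructor
  · rintro ⟨hts, ht⟩
    obtain rfl | hne := t.eq_empty_or_nonempty
    · exact Or.inl rfl
    obtain ⟨m, hm, hmax⟩ := ht.exists_forall_rel_of_finset hne
    refine Or.inr ⟨m, hts hm, t.erase m, ⟨fun x hx => ?_, ht.mono (by simp)⟩, insert_erase hm⟩
    obtain ⟨hxm, hx⟩ := mem_erase.mp hx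
    exact mem_filter.mpr ⟨hts hx, hmax x hx hxm⟩
  · rintro (rfl | ⟨q, hq, u, ⟨hus, hu⟩, rfl⟩)
    · simp
    refine ⟨insert_subset hq fun x hx => (mem_filter.mp (hus hx)).1, ?_⟩
    rw [coe_insert]
    exact hu.insert fun b hb _ => Or.inr (mem_filter.mp (hus hb)).2

open Classical in
theorem card_chains [IsStrictOrder α r] [DecidableRel r] (s : Finset α) :
    #(chains r s) = 1 + ∑ q ∈ s, #(chains r (s.filter (r · q))) := by
  have hbelow : ∀ q, ∀ u ∈ chains r (s.filter (r · q)), q ∉ u := fun q u hu hq =>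
    irrefl q (mem_filter.mp ((mem_chains.mp hu).1 hq)).2
  rw [chains_eq_insert_biUnion, card_insert_of_notMem, card_biUnion, add_comm]
  · congr 1
    refine sum_congr rfl fun q _ => card_image_of_injOn fun u hu v hv huv => ?_
    rw [← erase_insert (hbelow q u hu), ← erase_insert (hbelow q v hv)]
    exact congrArg (fun t : Finset α => t.erase q) huv
  · intro q _ q' _ hqq'
    refine disjoint_left.mpr fun t ht ht' => hqq' ?_
    obtain ⟨u, hu, rfl⟩ := mem_image.mp ht
    obtain ⟨v, hv, huv⟩ := mem_image.mp ht'
    by_contra hne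
    have hqv : q ∈ v := by
      have := huv ▸ mem_insert_self q u
      exact (mem_insert.mp this).resolve_left hne
    have hq'u : q' ∈ u := by
      have := huv.symm ▸ mem_insert_self q' v
      exact (mem_insert.mp this).resolve_left (Ne.symm hne)
    exact irrefl q <| _root_.trans (mem_filter.mp ((mem_chains.mp hv).1 hqv)).2
      (mem_filter.mp ((mem_chains.mp hu).1 hq'u)).2
  · simp only [mem_biUnion, mem_image, not_exists, not_and]
    exact fun q _ u _ h => insert_ne_empty q u h

end Chains

namespace OCI

/-- `Precedes q p`: the points `q` and `p` can both lie on the graph of an order-preserving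
partial injective contraction, with `q` to the left of `p`. -/
def Precedes (q p : ℕ × ℕ) : Prop :=
  q.1 < p.1 ∧ q.2 < p.2 ∧ p.2 + q.1 ≤ p.1 + q.2

instance : DecidableRel Precedes := fun _ _ => inferInstanceAs (Decidable (_ ∧ _ ∧ _))

instance : IsStrictOrder (ℕ × ℕ) Precedes where
  irrefl _ h := h.1.false
  trans _ _ _ h h' := ⟨h.1.trans h'.1, h.2.1.trans h'.2.1, by grind [Precedes]⟩

def below (p : ℕ × ℕ) : Finset (ℕ × ℕ) :=
  (range p.1 ×ˢ range p.2).filter (Precedes · p)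

theorem mem_below {p q : ℕ × ℕ} : q ∈ below p ↔ Precedes q p := by
  simp only [below, mem_filter, mem_product, mem_range, and_iff_right_iff_imp]
  exact fun h => ⟨h.1, h.2.1⟩

theorem filter_precedes_eq_below {s : Finset (ℕ × ℕ)} {q : ℕ × ℕ}
    (hs : ∀ p ∈ below q, p ∈ s) : s.filter (Precedes · q) = below q := by
  ext p
  rw [mem_filter, mem_below]
  exact ⟨And.right, fun h => ⟨hs p (mem_below.mpr h), h⟩⟩

noncomputable def numChainsBelow (x y : ℕ) : ℕ := #(chains Precedes (below (x, y)))

theorem numChainsBelow_eq (x y : ℕ) :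
    numChainsBelow x y = 1 + ∑ q ∈ below (x, y), numChainsBelow q.1 q.2 := by
  rw [numChainsBelow, card_chains]
  refine congrArg (1 + ·) (sum_congr rfl fun q hq => ?_)
  rw [filter_precedes_eq_below fun p hp => mem_below.mpr ?_]
  · rfl
  exact _root_.trans (mem_below.mp hp) (mem_below.mp hq)

theorem numChainsBelow_zero_right (x : ℕ) : numChainsBelow x 0 = 1 := by
  rw [numChainsBelow_eq]
  simp [below]

theorem below_add_right (x d : ℕ) :
    below (x, x + d) = (below (x, x)).image fun q => (q.1, q.2 + d) := by
  ext ⟨a, b⟩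
  simp only [mem_image, mem_below, Precedes, Prod.exists, Prod.mk.injEq]
  constructor
  · intro h
    exact ⟨a, b - d, by omega, rfl, by omega⟩
  · rintro ⟨a, b, h, rfl, rfl⟩
    omega

theorem numChainsBelow_of_le {x y : ℕ} (h : x ≤ y) : numChainsBelow x y = numChainsBelow x x := by
  induction x using Nat.strong_induction_on generalizing y with
  | _ x ih =>
  obtain ⟨d, rfl⟩ := Nat.exists_eq_add_of_le h
  rw [numChainsBelow_eq, numChainsBelow_eq x x, below_add_right,
    sum_image fun p _ q _ hpq => by simpa [Prod.ext_iff] using hpq]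
  refine congrArg (1 + ·) (sum_congr rfl fun q hq => ?_)
  obtain ⟨hqx, -, hq⟩ := mem_below.mp hq
  rw [ih q.1 hqx (y := q.2 + d) (by omega), ih q.1 hqx (y := q.2) (by omega)]

theorem below_succ_succ (x y : ℕ) :
    below (x + 1, y + 1) =
      insert (x, y) (below (x, y) ∪ (range x).image fun a => (a, y)) := by
  ext ⟨a, b⟩
  simp only [mem_insert, mem_union, mem_image, mem_below, Precedes, mem_range, Prod.mk.injEq]
  grind

theorem numChainsBelow_succ_succ (x y : ℕ) :
    numChainsBelow (x + 1) (y + 1) =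
      2 * numChainsBelow x y + ∑ a ∈ range x, numChainsBelow a y := by
  have hxy : (x, y) ∉ below (x, y) ∪ (range x).image fun a => (a, y) := by
    simp [mem_below, Precedes]
  have hdisj : Disjoint (below (x, y)) ((range x).image fun a => (a, y)) := by
    refine disjoint_left.mpr fun q hq hq' => ?_
    obtain ⟨a, -, rfl⟩ := mem_image.mp hq'
    exact (mem_below.mp hq).2.1.false
  rw [numChainsBelow_eq, below_succ_succ, sum_insert hxy, sum_union hdisj,
    sum_image fun a _ b _ hab => by simpa using hab, numChainsBelow_eq x y]
  ring

theorem sum_range_numChainsBelow_self (x : ℕ) :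
    ∑ a ∈ range x, numChainsBelow a x = Nat.fib (2 * x) := by
  suffices h : numChainsBelow x x = Nat.fib (2 * x + 1) ∧
      ∑ a ∈ range x, numChainsBelow a x = Nat.fib (2 * x) from h.2
  induction x with
  | zero => simp [numChainsBelow_zero_right]
  | succ x ih =>
    have hcol : ∑ a ∈ range x, numChainsBelow a (x + 1) = ∑ a ∈ range x, numChainsBelow a x :=
      sum_congr rfl fun a ha => by
        have ha : a < x := mem_range.mp ha
        rw [numChainsBelow_of_le (y := x + 1) (by omega), numChainsBelow_of_le (y := x) ha.le]
    rw [numChainsBelow_succ_succ, sum_range_succ, hcol, numChainsBelow_of_le x.le_succ, ih.1, ih.2,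
      show 2 * (x + 1) + 1 = 2 * x + 1 + 2 by ring, show 2 * (x + 1) = 2 * x + 2 by ring,
      Nat.fib_add_two, Nat.fib_add_two]
    constructor <;> ring

noncomputable def gridSum (n : ℕ) : ℕ := ∑ x ∈ range n, ∑ y ∈ range n, numChainsBelow x y

noncomputable def rowSum (x : ℕ) : ℕ := ∑ y ∈ range (x + 1), numChainsBelow x y

theorem sum_range_sum_range_succ (x : ℕ) :
    ∑ a ∈ range x, ∑ y ∈ range (x + 1), numChainsBelow a y = gridSum x + Nat.fib (2 * x) := by
  simp only [sum_range_succ _ x, sum_add_distrib, sum_range_numChainsBelow_self, gridSum]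

theorem gridSum_succ (n : ℕ) : gridSum (n + 1) = gridSum n + rowSum n + Nat.fib (2 * n) := by
  rw [gridSum, sum_range_succ, sum_range_sum_range_succ, rowSum]
  ring

theorem rowSum_succ (x : ℕ) :
    rowSum (x + 1) = 2 * rowSum x + (1 + gridSum x) + Nat.fib (2 * x) := by
  rw [rowSum, sum_range_succ', numChainsBelow_zero_right]
  simp only [numChainsBelow_succ_succ, sum_add_distrib, ← mul_sum]
  rw [sum_comm, sum_range_sum_range_succ, rowSum]
  ring

theorem five_mul_rowSum_and_gridSum (x : ℕ) :
    5 * (rowSum x : ℤ) = (2 - x) * Nat.fib (2 * x) + (2 * x + 5) * Nat.fib (2 * x + 1) ∧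
      5 * (1 + gridSum x : ℤ) = (3 * x - 1) * Nat.fib (2 * x) - (x - 5) * Nat.fib (2 * x + 1) := by
  induction x with
  | zero => simp [rowSum, gridSum, numChainsBelow_zero_right]
  | succ x ih =>
    have hfib2 : (Nat.fib (2 * (x + 1)) : ℤ) = Nat.fib (2 * x) + Nat.fib (2 * x + 1) := by
      rw [show 2 * (x + 1) = 2 * x + 2 by ring, Nat.fib_add_two, Nat.cast_add]
    have hfib3 : (Nat.fib (2 * (x + 1) + 1) : ℤ) = Nat.fib (2 * x) + 2 * Nat.fib (2 * x + 1) := by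
      rw [show 2 * (x + 1) + 1 = 2 * x + 1 + 2 by ring, Nat.fib_add_two, Nat.fib_add_two]
      push_cast
      ring
    rw [rowSum_succ, gridSum_succ, hfib2, hfib3]
    push_cast
    constructor
    · linear_combination 2 * ih.1 + ih.2
    · linear_combination ih.1 + ih.2

section Graph

variable {n : ℕ}

def graph (f : Fin n → Option (Fin n)) : Finset (ℕ × ℕ) :=
  (univ.filter fun p : Fin n × Fin n => f p.1 = some p.2).image fun p => (p.1.val, p.2.val)

theorem mem_graph {f : Fin n → Option (Fin n)} {p : ℕ × ℕ} :
    p ∈ graph f ↔ ∃ x a, f x = some a ∧ (x.val, a.val) = p := by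
  simp [graph]

theorem mk_val_mem_graph {f : Fin n → Option (Fin n)} {x a : Fin n} :
    (x.val, a.val) ∈ graph f ↔ f x = some a := by
  simp [mem_graph, Fin.val_inj]

theorem graph_injective : Function.Injective (graph (n := n)) := fun f g h =>
  funext fun x => Option.ext fun a => by rw [← mk_val_mem_graph, h, mk_val_mem_graph]

theorem graph_subset (f : Fin n → Option (Fin n)) : graph f ⊆ range n ×ˢ range n := by
  intro p hp
  obtain ⟨x, a, -, rfl⟩ := mem_graph.mp hp
  simp

theorem precedes_of_lt {f : Fin n → Option (Fin n)} (hf : PInj f ∧ Contr f ∧ OrdPres f)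
    {x y a b : Fin n} (hx : f x = some a) (hy : f y = some b) (hxy : x < y) :
    Precedes (x.val, a.val) (y.val, b.val) := by
  have hab : a < b := lt_of_le_of_ne (hf.2.2 x y a b hx hy hxy.le) fun hab =>
    hxy.ne (hf.1 x y a hx (hab ▸ hy))
  have hcontr := hf.2.1 x y a b hx hy
  refine ⟨hxy, hab, ?_⟩
  simp only [Fin.lt_def] at hxy hab
  grind

theorem isChain_graph_iff {f : Fin n → Option (Fin n)} :
    IsChain Precedes (graph f : Set (ℕ × ℕ)) ↔ PInj f ∧ Contr f ∧ OrdPres f := by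
  constructor
  · intro hc
    have key : ∀ x y a b, f x = some a → f y = some b → (x = y ∧ a = b) ∨
        Precedes (x.val, a.val) (y.val, b.val) ∨ Precedes (y.val, b.val) (x.val, a.val) := by
      intro x y a b hx hy
      by_cases h : (x.val, a.val) = (y.val, b.val)
      · simp only [Prod.mk.injEq, Fin.val_inj] at h
        exact Or.inl h
      · exact Or.inr (hc (mk_val_mem_graph.mpr hx) (mk_val_mem_graph.mpr hy) h)
    refine ⟨fun x y a hx hy => ?_, fun x y a b hx hy => ?_, fun x y a b hx hy hxy => ?_⟩
    all_goals
      rcases key _ _ _ _ hx hy with ⟨rfl, hab⟩ | h | h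
      · simp [hab]
      all_goals
        obtain ⟨h1, h2, h3⟩ := h
        simp only [Fin.le_iff_val_le_val] at *
        grind
  · rintro hf p hp q hq hpq
    obtain ⟨x, a, hx, rfl⟩ := mem_graph.mp hp
    obtain ⟨y, b, hy, rfl⟩ := mem_graph.mp hq
    rcases lt_trichotomy x y with hxy | rfl | hxy
    · exact Or.inl (precedes_of_lt hf hx hy hxy)
    · exact absurd (by rw [Option.some.inj (hx.symm.trans hy)]) hpq
    · exact Or.inr (precedes_of_lt hf hy hx hxy)

theorem exists_graph_eq {S : Finset (ℕ × ℕ)} (hS : S ⊆ range n ×ˢ range n)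
    (hc : IsChain Precedes (S : Set (ℕ × ℕ))) : ∃ f : Fin n → Option (Fin n), graph f = S := by
  classical
  have huniq : ∀ {x a b : ℕ}, (x, a) ∈ S → (x, b) ∈ S → a = b := fun ha hb => by
    by_contra hab
    rcases hc ha hb (by simpa using hab) with h | h <;> exact h.1.false
  let f : Fin n → Option (Fin n) := fun x =>
    if h : ∃ a : Fin n, (x.val, a.val) ∈ S then some h.choose else none
  have hf : ∀ x a, f x = some a ↔ (x.val, a.val) ∈ S := by
    intro x a
    by_cases h : ∃ a : Fin n, (x.val, a.val) ∈ S
    · simp only [f, dif_pos h, Option.some.injEq]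
      exact ⟨fun ha => ha ▸ h.choose_spec, fun ha => Fin.ext (huniq h.choose_spec ha)⟩
    · simp only [f, dif_neg h, reduceCtorEq, false_iff]
      exact fun ha => h ⟨a, ha⟩
  refine ⟨f, ?_⟩
  ext ⟨x, a⟩
  constructor
  · intro hp
    obtain ⟨x, a, hx, hxa⟩ := mem_graph.mp hp
    exact hxa ▸ (hf x a).mp hx
  · intro hp
    obtain ⟨hx, ha⟩ := mem_product.mp (hS hp)
    exact mk_val_mem_graph.mpr ((hf ⟨x, mem_range.mp hx⟩ ⟨a, mem_range.mp ha⟩).mpr hp)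

theorem card_oci_eq_card_chains (n : ℕ) :
    Nat.card {f : Fin n → Option (Fin n) // PInj f ∧ Contr f ∧ OrdPres f} =
      #(chains Precedes (range n ×ˢ range n)) := by
  classical
  rw [Nat.card_eq_fintype_card, Fintype.card_subtype, ← card_image_of_injective _ graph_injective]
  congr 1
  ext S
  simp only [mem_image, mem_filter, mem_univ, true_and, mem_chains]
  constructor
  · rintro ⟨f, hf, rfl⟩
    exact ⟨graph_subset f, isChain_graph_iff.mpr hf⟩
  · rintro ⟨hS, hc⟩
    obtain ⟨f, rfl⟩ := exists_graph_eq hS hc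
    exact ⟨f, isChain_graph_iff.mp hc, rfl⟩

end Graph

theorem card_chains_grid (n : ℕ) :
    #(chains Precedes (range n ×ˢ range n)) = 1 + gridSum n := by
  rw [card_chains, gridSum, ← sum_product']
  refine congrArg (1 + ·) (sum_congr rfl fun q hq => ?_)
  rw [filter_precedes_eq_below fun p hp => ?_]
  · rfl
  obtain ⟨h1, h2, -⟩ := mem_below.mp hp
  simp only [mem_product, mem_range] at hq ⊢
  omega

end OCI

/-- The order of `OCI_n` satisfies `5·|OCI_n| = (3n-1)·F_{2n} - (n-5)·F_{2n+1}`. -/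
theorem OCI_order (n : ℕ) :
    (5 : ℤ) * (Nat.card {f : Fin n → Option (Fin n) //
        PInj f ∧ Contr f ∧ OrdPres f} : ℤ) =
      (3 * (n : ℤ) - 1) * Nat.fib (2 * n) - ((n : ℤ) - 5) * Nat.fib (2 * n + 1) := by
  rw [OCI.card_oci_eq_card_chains, OCI.card_chains_grid]
  exact_mod_cast (OCI.five_mul_rowSum_and_gridSum n).2
end

section
/- Fix n ≥ 1, p ≥ 2, and k⁻, k⁺, l⁺ ∈ X_n. The number of α ∈ ODCI_n with min(im α) = k⁻, max(im α) = k⁺, max(dom α) = l⁺ and height h(α) = p equals C(l⁺ − k⁺ + p − 1, p − 1)·C(k⁺ − k⁻ − 1, p − 2). -/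
/-- Integer binomial coefficient, `0` whenever `b < 0` or `b > a`. -/
def ichoose (a b : ℤ) : ℕ :=
  if 0 ≤ b ∧ b ≤ a then a.toNat.choose b.toNat else 0

/-!
An order-preserving partial injection of height `q + 1` is the map `x i ↦ y i` for the increasing
enumerations `x` of its domain and `y` of its image. It is a contraction iff the gaps `x i - y i`
are nondecreasing in `i`, and order-decreasing iff they are nonnegative. With the waists and
the right shoulder prescribed, the data are therefore independent: an increasing `y` from `k⁻` to
`k⁺`, i.e. `q - 1` points of `]k⁻, k⁺[`, and a nondecreasing `d : Fin (q + 1) → ℕ` ending at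
`l⁺ - k⁺`, which `i ↦ d i + i` turns into `q` points below `l⁺ - k⁺ + q`.
-/

theorem Nat.card_fin_orderEmbedding (k : ℕ) (I : Type*) [LinearOrder I] :
    Nat.card (Fin k ↪o I) = (Nat.card I).choose k := by
  rw [Nat.card_congr Set.powersetCard.ofFinEmbEquiv, Set.powersetCard.card]

section OrderEmbeddings

variable {α : Type*} [LinearOrder α] {k : ℕ}

def finSuccOrderEmbZeroEquiv (a : α) :
    {s : Fin (k + 1) ↪o α // s 0 = a} ≃ (Fin k ↪o Set.Ioi a) where
  toFun s := OrderEmbedding.ofStrictMono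
    (fun i => ⟨s.1 i.succ, lt_of_eq_of_lt s.2.symm (s.1.strictMono i.succ_pos)⟩)
    fun _ _ hij => s.1.strictMono (Fin.succ_lt_succ_iff.2 hij)
  invFun t := ⟨OrderEmbedding.ofStrictMono (Fin.cons a fun i => (t i : α))
    (Fin.strictMono_cons.2 ⟨fun i => (t i).2, (Subtype.strictMono_coe _).comp t.strictMono⟩), rfl⟩
  left_inv s := by
    ext i
    cases i using Fin.cases
    · exact s.2.symm
    · rfl
  right_inv t := by ext i; simp

lemma Fin.strictMono_snoc {f : Fin k → α} {b : α} :
    StrictMono (Fin.snoc f b : Fin (k + 1) → α) ↔ StrictMono f ∧ ∀ i, f i < b := by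
  rw [← Fin.insertNth_last', Fin.strictMono_insertNth_iff]
  simp [Fin.castSucc_lt_last, (Fin.castSucc_lt_last _).not_ge]

def finSuccOrderEmbLastEquiv (b : α) :
    {s : Fin (k + 1) ↪o α // s (Fin.last k) = b} ≃ (Fin k ↪o Set.Iio b) where
  toFun s := OrderEmbedding.ofStrictMono
    (fun i => ⟨s.1 i.castSucc, lt_of_lt_of_eq (s.1.strictMono i.castSucc_lt_last) s.2⟩)
    fun _ _ hij => s.1.strictMono (Fin.castSucc_lt_castSucc_iff.2 hij)
  invFun t := ⟨OrderEmbedding.ofStrictMono (Fin.snoc (fun i => (t i : α)) b)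
    (Fin.strictMono_snoc.2 ⟨(Subtype.strictMono_coe _).comp t.strictMono, fun i => (t i).2⟩),
    by simp⟩
  left_inv s := by
    ext i
    cases i using Fin.lastCases
    · simp [s.2]
    · simp only [OrderEmbedding.coe_ofStrictMono, Fin.snoc_castSucc]
      rfl
  right_inv t := by ext i; simp

end OrderEmbeddings

lemma Fin.val_le_of_strictMono {k : ℕ} {s : Fin k → ℕ} (hs : StrictMono s) (i : Fin k) :
    (i : ℕ) ≤ s i := by
  obtain ⟨i, hi⟩ := i
  induction i with
  | zero => exact Nat.zero_le _
  | succ j ih =>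
    have hj : s ⟨j, by omega⟩ < s ⟨j + 1, hi⟩ := hs (Fin.mk_lt_mk.2 j.lt_succ_self)
    exact (ih (by omega)).trans_lt hj

def monotoneEquivOrderEmb (k : ℕ) : {d : Fin (k + 1) → ℕ // Monotone d} ≃ (Fin (k + 1) ↪o ℕ) where
  toFun d := OrderEmbedding.ofStrictMono (fun i => d.1 i + i) fun i j hij => by
    have := d.2 hij.le
    have : (i : ℕ) < j := hij
    dsimp only
    omega
  invFun s := ⟨fun i => s i - i, Fin.monotone_iff_le_succ.2 fun i => by
    have := s.strictMono (Fin.castSucc_lt_succ (i := i))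
    simp only [Fin.val_succ, Fin.val_castSucc]
    omega⟩
  left_inv d := by ext i; exact Nat.add_sub_cancel _ _
  right_inv s := by
    ext i
    exact Nat.sub_add_cancel (Fin.val_le_of_strictMono s.strictMono i)

lemma card_orderEmb_fixed_ends {n r : ℕ} {a b : Fin n} (hab : a < b) :
    Nat.card {y : Fin (r + 2) ↪o Fin n // y 0 = a ∧ y (Fin.last _) = b} =
      ((b : ℕ) - a - 1).choose r := by
  have hIoo : Nat.card (Set.Iio (⟨b, hab⟩ : Set.Ioi a)) = (b : ℕ) - a - 1 := by
    rw [← Fin.card_Ioo, ← Set.toFinset_Ioo, ← Nat.card_eq_card_toFinset]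
    exact Nat.card_congr (Equiv.subtypeSubtypeEquivSubtypeInter (· ∈ Set.Ioi a) (· < b))
  calc _ = Nat.card {t : {y : Fin (r + 2) ↪o Fin n // y 0 = a} // t.1 (Fin.last _) = b} :=
        Nat.card_congr (Equiv.subtypeSubtypeEquivSubtypeInter _ _).symm
    _ = Nat.card {z : Fin (r + 1) ↪o Set.Ioi a // z (Fin.last r) = ⟨b, hab⟩} :=
        Nat.card_congr <| (finSuccOrderEmbZeroEquiv a).subtypeEquiv fun _ => by
          rw [Subtype.ext_iff]; rfl
    _ = _ := by
      rw [Nat.card_congr (finSuccOrderEmbLastEquiv _), Nat.card_fin_orderEmbedding, hIoo]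

lemma card_monotone_fin_last_eq (q m : ℕ) :
    Nat.card {d : Fin (q + 1) → ℕ // Monotone d ∧ d (Fin.last q) = m} = (m + q).choose q := by
  calc _ = Nat.card {t : {d : Fin (q + 1) → ℕ // Monotone d} // t.1 (Fin.last q) = m} :=
        Nat.card_congr (Equiv.subtypeSubtypeEquivSubtypeInter _ _).symm
    _ = Nat.card {s : Fin (q + 1) ↪o ℕ // s (Fin.last q) = m + q} :=
        Nat.card_congr <| (monotoneEquivOrderEmb q).subtypeEquiv fun t => by
          show _ ↔ t.1 (Fin.last q) + (Fin.last q : ℕ) = m + q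
          rw [Fin.val_last, Nat.add_right_cancel_iff]
    _ = _ := by
      rw [Nat.card_congr (finSuccOrderEmbLastEquiv _), Nat.card_fin_orderEmbedding,
        Nat.card_coe_set_eq, Set.ncard_Iio_nat]

section PartialMaps

variable {n k : ℕ}

lemma mem_pdom_iff {f : Fin n → Option (Fin n)} {z : Fin n} : z ∈ pdom f ↔ ∃ w, f z = some w := by
  simp [pdom, Option.isSome_iff_exists]

lemma mem_pim_iff {f : Fin n → Option (Fin n)} {w : Fin n} : w ∈ pim f ↔ ∃ z, f z = some w := by
  simp [pim]

lemma card_pdom_eq_pheight {f : Fin n → Option (Fin n)} (hf : PInj f) :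
    (pdom f).card = pheight f := by
  refine Finset.card_bij (fun z hz => (f z).get (by simpa [pdom] using hz)) (fun z _ => ?_)
    (fun z _ z' _ h => hf z z' _ (Option.some_get _).symm (by rw [h, Option.some_get]))
    (fun w hw => ?_)
  · exact mem_pim_iff.2 ⟨z, by simp⟩
  · obtain ⟨z, hz⟩ := mem_pim_iff.1 hw
    exact ⟨z, mem_pdom_iff.2 ⟨w, hz⟩, by simp [hz]⟩

/-- The order-preserving partial injection `x i ↦ y i`. -/
noncomputable def ofEmbPair (x y : Fin k ↪o Fin n) : Fin n → Option (Fin n) :=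
  fun z => (Function.partialInv x z).map y

variable {x y : Fin k ↪o Fin n}

lemma ofEmbPair_eq_some_iff {z w : Fin n} :
    ofEmbPair x y z = some w ↔ ∃ i, x i = z ∧ y i = w := by
  simp only [ofEmbPair, Option.map_eq_some_iff, x.injective.isPartialInv _ _]

lemma ofEmbPair_apply (i : Fin k) : ofEmbPair x y (x i) = some (y i) :=
  ofEmbPair_eq_some_iff.2 ⟨i, rfl, rfl⟩

lemma pdom_ofEmbPair : pdom (ofEmbPair x y) = Finset.univ.image x := by
  ext z
  simp [mem_pdom_iff, ofEmbPair_eq_some_iff]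

lemma pim_ofEmbPair : pim (ofEmbPair x y) = Finset.univ.image y := by
  ext w
  simp [mem_pim_iff, ofEmbPair_eq_some_iff]

lemma pInj_ofEmbPair : PInj (ofEmbPair x y) := by
  intro z z' w hz hz'
  obtain ⟨i, rfl, rfl⟩ := ofEmbPair_eq_some_iff.1 hz
  obtain ⟨j, rfl, hj⟩ := ofEmbPair_eq_some_iff.1 hz'
  rw [y.injective hj]

lemma ordPres_ofEmbPair : OrdPres (ofEmbPair x y) := by
  intro z z' w w' hz hz' hle
  obtain ⟨i, rfl, rfl⟩ := ofEmbPair_eq_some_iff.1 hz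
  obtain ⟨j, rfl, rfl⟩ := ofEmbPair_eq_some_iff.1 hz'
  exact y.le_iff_le.2 (x.le_iff_le.1 hle)

lemma pheight_ofEmbPair : pheight (ofEmbPair x y) = k := by
  rw [pheight, pim_ofEmbPair, Finset.card_image_of_injective _ y.injective, Finset.card_univ,
    Fintype.card_fin]

lemma eq_ofEmbPair {f : Fin n → Option (Fin n)} (hinj : PInj f) (hmono : OrdPres f)
    (hdom : (pdom f).card = k) (him : (pim f).card = k) :
    f = ofEmbPair ((pdom f).orderEmbOfFin hdom) ((pim f).orderEmbOfFin him) := by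
  set x := (pdom f).orderEmbOfFin hdom
  choose g hg using fun i => mem_pdom_iff.1 ((pdom f).orderEmbOfFin_mem hdom i)
  have hg_strictMono : StrictMono g := fun i j hij =>
    (hmono _ _ _ _ (hg i) (hg j) (x.monotone hij.le)).lt_of_ne fun h =>
      hij.ne (x.injective (hinj _ _ _ (hg i) (h ▸ hg j)))
  have hgy := Finset.orderEmbOfFin_unique him (fun i => mem_pim_iff.2 ⟨_, hg i⟩) hg_strictMono
  funext z
  by_cases hz : z ∈ pdom f
  · obtain ⟨i, rfl⟩ : z ∈ Set.range x := by rwa [Finset.range_orderEmbOfFin]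
    rw [hg, ofEmbPair_apply, hgy]
  · rw [Option.eq_none_iff_forall_ne_some.2 fun w hw => hz (mem_pdom_iff.2 ⟨w, hw⟩),
      eq_comm, Option.eq_none_iff_forall_ne_some]
    intro w hw
    obtain ⟨i, rfl, -⟩ := ofEmbPair_eq_some_iff.1 hw
    exact hz (Finset.orderEmbOfFin_mem _ _ i)

noncomputable def embPairEquiv (n k : ℕ) :
    {f : Fin n → Option (Fin n) // PInj f ∧ OrdPres f ∧ pheight f = k} ≃
      (Fin k ↪o Fin n) × (Fin k ↪o Fin n) where
  toFun f := ((pdom f.1).orderEmbOfFin ((card_pdom_eq_pheight f.2.1).trans f.2.2.2),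
    (pim f.1).orderEmbOfFin f.2.2.2)
  invFun xy := ⟨ofEmbPair xy.1 xy.2, pInj_ofEmbPair, ordPres_ofEmbPair, pheight_ofEmbPair⟩
  left_inv f := Subtype.ext (eq_ofEmbPair f.2.1 f.2.2.1 _ _).symm
  right_inv xy := by
    refine Prod.ext (Finset.orderEmbOfFin_unique' _ fun i => ?_).symm
      (Finset.orderEmbOfFin_unique' _ fun i => ?_).symm
    · simp [pdom_ofEmbPair]
    · simp [pim_ofEmbPair]

lemma card_pInj_ordPres_subtype (P : (Fin n → Option (Fin n)) → Prop) :
    Nat.card {f // (PInj f ∧ OrdPres f ∧ pheight f = k) ∧ P f} =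
      Nat.card {xy : (Fin k ↪o Fin n) × (Fin k ↪o Fin n) // P (ofEmbPair xy.1 xy.2)} :=
  Nat.card_congr (((embPairEquiv n k).symm.subtypeEquiv fun _ => Iff.rfl).trans
    (Equiv.subtypeSubtypeEquivSubtypeInter _ _)).symm

lemma contr_ofEmbPair_iff :
    Contr (ofEmbPair x y) ↔ Monotone fun i => ((x i : ℕ) : ℤ) - (y i : ℕ) := by
  have key : ∀ ⦃i j⦄, i ≤ j → (|((y i : ℕ) : ℤ) - (y j : ℕ)| ≤ |((x i : ℕ) : ℤ) - (x j : ℕ)| ↔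
      ((x i : ℕ) : ℤ) - (y i : ℕ) ≤ (x j : ℕ) - (y j : ℕ)) := fun i j hij => by
    have hx : ((x i : ℕ) : ℤ) ≤ (x j : ℕ) := by exact_mod_cast x.monotone hij
    have hy : ((y i : ℕ) : ℤ) ≤ (y j : ℕ) := by exact_mod_cast y.monotone hij
    rw [abs_of_nonpos (by linarith), abs_of_nonpos (by linarith)]
    constructor <;> intro <;> linarith
  refine ⟨fun h i j hij => (key hij).1 (h _ _ _ _ (ofEmbPair_apply i) (ofEmbPair_apply j)), ?_⟩
  intro h z z' w w' hz hz'
  obtain ⟨i, rfl, rfl⟩ := ofEmbPair_eq_some_iff.1 hz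
  obtain ⟨j, rfl, rfl⟩ := ofEmbPair_eq_some_iff.1 hz'
  rcases le_total i j with hij | hij
  · exact (key hij).2 (h hij)
  · rw [abs_sub_comm, abs_sub_comm ((x i : ℕ) : ℤ)]
    exact (key hij).2 (h hij)

lemma ordDecr_ofEmbPair_iff : OrdDecr (ofEmbPair x y) ↔ ∀ i, y i ≤ x i := by
  refine ⟨fun h i => h _ _ (ofEmbPair_apply i), fun h z w hz => ?_⟩
  obtain ⟨i, rfl, rfl⟩ := ofEmbPair_eq_some_iff.1 hz
  exact h i

end PartialMaps

section Waists

variable {n q : ℕ}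

lemma min_image_univ_of_monotone {α : Type*} [LinearOrder α] {y : Fin (q + 1) → α}
    (hy : Monotone y) : (Finset.univ.image y).min = y 0 :=
  le_antisymm (Finset.min_le (Finset.mem_image_of_mem _ (Finset.mem_univ _)))
    (Finset.le_min fun _ hw => by
      obtain ⟨i, -, rfl⟩ := Finset.mem_image.1 hw
      exact WithTop.coe_le_coe.2 (hy (Fin.zero_le i)))

lemma max_image_univ_of_monotone {α : Type*} [LinearOrder α] {y : Fin (q + 1) → α}
    (hy : Monotone y) : (Finset.univ.image y).max = y (Fin.last q) :=
  le_antisymm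
    (Finset.max_le fun _ hw => by
      obtain ⟨i, -, rfl⟩ := Finset.mem_image.1 hw
      exact WithBot.coe_le_coe.2 (hy (Fin.le_last i)))
    (Finset.le_max (Finset.mem_image_of_mem _ (Finset.mem_univ _)))

/-- `(x, y)` enumerates the domain and the image of an element of `ODCI_n` with left waist `a`,
right waist `b` and right shoulder `l`. -/
def IsWaistPair (a b l : Fin n) (x y : Fin (q + 1) ↪o Fin n) : Prop :=
  Monotone (fun i => ((x i : ℕ) : ℤ) - (y i : ℕ)) ∧ (∀ i, y i ≤ x i) ∧
    y 0 = a ∧ y (Fin.last q) = b ∧ x (Fin.last q) = l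

theorem card_ODCI_eq_card_isWaistPair (a b l : Fin n) :
    Nat.card {f : Fin n → Option (Fin n) //
        PInj f ∧ Contr f ∧ OrdPres f ∧ OrdDecr f ∧
        (pim f).min = (a : WithTop (Fin n)) ∧
        (pim f).max = (b : WithBot (Fin n)) ∧
        (pdom f).max = (l : WithBot (Fin n)) ∧
        pheight f = q + 1} =
      Nat.card {xy : (Fin (q + 1) ↪o Fin n) × (Fin (q + 1) ↪o Fin n) //
        IsWaistPair a b l xy.1 xy.2} := by
  calc _ = Nat.card {f // (PInj f ∧ OrdPres f ∧ pheight f = q + 1) ∧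
        Contr f ∧ OrdDecr f ∧ (pim f).min = (a : WithTop (Fin n)) ∧
        (pim f).max = (b : WithBot (Fin n)) ∧ (pdom f).max = (l : WithBot (Fin n))} :=
        Nat.card_congr (Equiv.subtypeEquivRight fun _ => by tauto)
    _ = _ := by
      rw [card_pInj_ordPres_subtype]
      refine Nat.card_congr (Equiv.subtypeEquivRight fun xy => ?_)
      rw [contr_ofEmbPair_iff, ordDecr_ofEmbPair_iff, pim_ofEmbPair, pdom_ofEmbPair,
        min_image_univ_of_monotone xy.2.monotone, max_image_univ_of_monotone xy.2.monotone,
        max_image_univ_of_monotone xy.1.monotone,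
        WithTop.coe_inj, WithBot.coe_inj, WithBot.coe_inj]
      rfl

variable {a b l : Fin n}

lemma IsWaistPair.right_le_shoulder {x y : Fin (q + 1) ↪o Fin n} (h : IsWaistPair a b l x y) :
    b ≤ l := by
  obtain ⟨-, hle, -, rfl, rfl⟩ := h
  exact hle _

lemma IsWaistPair.left_lt_right {x y : Fin (q + 2) ↪o Fin n} (h : IsWaistPair a b l x y) :
    a < b := by
  obtain ⟨-, -, rfl, rfl, -⟩ := h
  exact y.strictMono Fin.last_pos

lemma IsWaistPair.monotone_gap {x y : Fin (q + 1) ↪o Fin n} (h : IsWaistPair a b l x y) :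
    Monotone fun i => (x i : ℕ) - y i := fun i j hij => by
  have := h.1 hij
  have := h.2.1 i
  have := h.2.1 j
  dsimp only at *
  omega

lemma IsWaistPair.gap_last {x y : Fin (q + 1) ↪o Fin n} (h : IsWaistPair a b l x y) :
    (x (Fin.last q) : ℕ) - y (Fin.last q) = l - b := by
  rw [h.2.2.2.1, h.2.2.2.2]

def OrderEmbedding.addMonotone {k : ℕ} (y : Fin k ↪o Fin n) (d : Fin k → ℕ) (hd : Monotone d)
    (h : ∀ i, (y i : ℕ) + d i < n) : Fin k ↪o Fin n :=
  OrderEmbedding.ofStrictMono (fun i => ⟨y i + d i, h i⟩) fun i j hij => by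
    have := y.strictMono hij
    have := hd hij.le
    simp only [Fin.mk_lt_mk]
    omega

@[simp]
lemma OrderEmbedding.val_addMonotone_apply {k : ℕ} (y : Fin k ↪o Fin n) (d : Fin k → ℕ)
    (hd : Monotone d) (h : ∀ i, (y i : ℕ) + d i < n) (i : Fin k) :
    (y.addMonotone d hd h i : ℕ) = y i + d i :=
  rfl

lemma add_lt_of_monotone_of_last_eq {y : Fin (q + 1) ↪o Fin n} {d : Fin (q + 1) → ℕ}
    (hbl : b ≤ l) (hy : y (Fin.last q) = b) (hd : Monotone d) (hdl : d (Fin.last q) = l - b)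
    (i : Fin (q + 1)) : (y i : ℕ) + d i < n := by
  have := y.monotone (Fin.le_last i)
  have := hd (Fin.le_last i)
  have := congrArg Fin.val hy
  have : (b : ℕ) ≤ l := hbl
  have := l.isLt
  omega

lemma isWaistPair_addMonotone {y : Fin (q + 1) ↪o Fin n} {d : Fin (q + 1) → ℕ} (hbl : b ≤ l)
    (hy : y 0 = a ∧ y (Fin.last q) = b) (hd : Monotone d ∧ d (Fin.last q) = l - b) :
    IsWaistPair a b l (y.addMonotone d hd.1 (add_lt_of_monotone_of_last_eq hbl hy.2 hd.1 hd.2))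
      y := by
  refine ⟨fun i j hij => ?_, fun i => ?_, hy.1, hy.2, Fin.ext ?_⟩
  · simpa using hd.1 hij
  · simp [Fin.le_def]
  · have := congrArg Fin.val hy.2
    have : (b : ℕ) ≤ l := hbl
    simp only [OrderEmbedding.val_addMonotone_apply, hd.2]
    omega

def isWaistPairEquiv (hbl : b ≤ l) :
    {xy : (Fin (q + 1) ↪o Fin n) × (Fin (q + 1) ↪o Fin n) // IsWaistPair a b l xy.1 xy.2} ≃
      {y : Fin (q + 1) ↪o Fin n // y 0 = a ∧ y (Fin.last q) = b} ×
        {d : Fin (q + 1) → ℕ // Monotone d ∧ d (Fin.last q) = l - b} where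
  toFun xy := (⟨xy.1.2, xy.2.2.2.1, xy.2.2.2.2.1⟩,
    ⟨fun i => xy.1.1 i - xy.1.2 i, xy.2.monotone_gap, xy.2.gap_last⟩)
  invFun yd := ⟨(yd.1.1.addMonotone yd.2.1 yd.2.2.1
      (add_lt_of_monotone_of_last_eq hbl yd.1.2.2 yd.2.2.1 yd.2.2.2), yd.1.1),
    isWaistPair_addMonotone hbl yd.1.2 yd.2.2⟩
  left_inv xy := by
    ext i
    · have := xy.2.2.1 i
      rw [Fin.le_def] at this
      simp only [OrderEmbedding.val_addMonotone_apply]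
      omega
    · rfl
  right_inv yd := by
    ext i
    · rfl
    · exact Nat.add_sub_cancel_left _ _

lemma card_isWaistPair (hbl : b ≤ l) :
    Nat.card {xy : (Fin (q + 1) ↪o Fin n) × (Fin (q + 1) ↪o Fin n) //
        IsWaistPair a b l xy.1 xy.2} =
      Nat.card {y : Fin (q + 1) ↪o Fin n // y 0 = a ∧ y (Fin.last q) = b} *
        Nat.card {d : Fin (q + 1) → ℕ // Monotone d ∧ d (Fin.last q) = l - b} := by
  rw [Nat.card_congr (isWaistPairEquiv hbl), Nat.card_prod]

end Waists

lemma ichoose_natCast (a b : ℕ) : ichoose a b = a.choose b := by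
  rw [ichoose]
  split_ifs with h
  · simp
  · rw [Nat.choose_eq_zero_of_lt (by omega)]

lemma ichoose_eq_zero_of_lt {a b : ℤ} (h : a < b) : ichoose a b = 0 :=
  if_neg (by omega)

theorem ODCI_count_waists_shoulder_general (n p : ℕ) (hp : 2 ≤ p)
    (kminus kplus lplus : Fin n) :
    Nat.card {f : Fin n → Option (Fin n) //
        PInj f ∧ Contr f ∧ OrdPres f ∧ OrdDecr f ∧
        (pim f).min = (kminus : WithTop (Fin n)) ∧
        (pim f).max = (kplus : WithBot (Fin n)) ∧
        (pdom f).max = (lplus : WithBot (Fin n)) ∧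
        pheight f = p} =
      ichoose ((lplus.val : ℤ) - (kplus.val : ℤ) + (p : ℤ) - 1) ((p : ℤ) - 1) *
      ichoose ((kplus.val : ℤ) - (kminus.val : ℤ) - 1) ((p : ℤ) - 2) := by
  obtain ⟨r, rfl⟩ : ∃ r, p = r + 2 := ⟨p - 2, by omega⟩
  rw [card_ODCI_eq_card_isWaistPair]
  by_cases h : kminus < kplus ∧ kplus ≤ lplus
  · obtain ⟨hab, hbl⟩ := h
    rw [card_isWaistPair hbl, card_orderEmb_fixed_ends hab, card_monotone_fin_last_eq,
      show (lplus : ℤ) - kplus + ((r + 2 : ℕ) : ℤ) - 1 = ((lplus - kplus + (r + 1) : ℕ) : ℤ) by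
        omega,
      show ((r + 2 : ℕ) : ℤ) - 1 = ((r + 1 : ℕ) : ℤ) by omega,
      show (kplus : ℤ) - kminus - 1 = ((kplus - kminus - 1 : ℕ) : ℤ) by omega,
      show ((r + 2 : ℕ) : ℤ) - 2 = (r : ℤ) by omega, ichoose_natCast, ichoose_natCast, mul_comm]
  · rw [Nat.card_eq_zero.2 (Or.inl ⟨fun xy => h ⟨xy.2.left_lt_right, xy.2.right_le_shoulder⟩⟩)]
    rcases not_and_or.1 h with h | h
    · rw [ichoose_eq_zero_of_lt (a := (kplus : ℤ) - kminus - 1) (by omega), mul_zero]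
    · rw [ichoose_eq_zero_of_lt (a := (lplus : ℤ) - kplus + (r + 2 : ℕ) - 1) (by omega), zero_mul]

/-- The number of elements of `ODCI_n` with prescribed left waist `k⁻`, right waist
`k⁺`, right shoulder `l⁺` and height `p ≥ 2` equals
`C(l⁺-k⁺+p-1, p-1)·C(k⁺-k⁻-1, p-2)`. -/
theorem ODCI_count_waists_shoulder (n p : ℕ) (hn : 1 ≤ n) (hp : 2 ≤ p)
    (kminus kplus lplus : Fin n) :
    Nat.card {f : Fin n → Option (Fin n) //
        PInj f ∧ Contr f ∧ OrdPres f ∧ OrdDecr f ∧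
        (pim f).min = (kminus : WithTop (Fin n)) ∧
        (pim f).max = (kplus : WithBot (Fin n)) ∧
        (pdom f).max = (lplus : WithBot (Fin n)) ∧
        pheight f = p} =
      ichoose ((lplus.val : ℤ) - (kplus.val : ℤ) + (p : ℤ) - 1) ((p : ℤ) - 1) *
      ichoose ((kplus.val : ℤ) - (kminus.val : ℤ) - 1) ((p : ℤ) - 2) :=
  ODCI_count_waists_shoulder_general n p hp kminus kplus lplus
end

section
/- Let F(n;p) denote the number of elements of ODCI_n of height p. Then for every p ≥ 0, F(n;p) = C(n+p, 2p). -/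
/-!
A map in `ODCI_n` of height `p` is determined by its domain `x₀ < ⋯ < x_{p-1}` and its image
`y₀ < ⋯ < y_{p-1}` (it sends `xᵢ ↦ yᵢ`). It is order-decreasing iff `yᵢ ≤ xᵢ`, and a contraction
iff the displacement `dᵢ = xᵢ - yᵢ` is nondecreasing. Appending to `y` the sequence
`k ↦ n + k - d_{p-1-k}` gives a strictly increasing sequence of length `2p` in `{0, …, n+p-1}`,
and every such sequence arises from exactly one pair `(x, y)`; there are `C(n+p, 2p)` of them.
-/

open Function

theorem Fin.strictMono_append {α : Type*} [Preorder α] {m k : ℕ} {u : Fin m → α} {v : Fin k → α}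
    (hu : StrictMono u) (hv : StrictMono v) (huv : ∀ i j, u i < v j) :
    StrictMono (Fin.append u v) := by
  intro a b hab
  induction a using Fin.addCases <;> induction b using Fin.addCases <;>
    simp only [Fin.append_left, Fin.append_right]
  · exact hu ((Fin.strictMono_castAdd k).lt_iff_lt.1 hab)
  · exact huv _ _
  · simp only [Fin.lt_def, Fin.val_natAdd, Fin.val_castAdd] at hab
    omega
  · exact hv ((Fin.natAdd_lt_natAdd_iff m).1 hab)

theorem StrictMono.fin_val_add_sub_le {k m : ℕ} {c : Fin k → Fin m} (hc : StrictMono c)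
    {a b : Fin k} (h : a ≤ b) : (c a : ℕ) + (b - a) ≤ c b := by
  have := Finset.card_le_card_of_injOn c (s := Finset.Icc a b) (t := Finset.Icc (c a) (c b))
    (fun z hz => by
      simp only [Finset.coe_Icc, Set.mem_Icc] at hz ⊢
      exact ⟨hc.monotone hz.1, hc.monotone hz.2⟩)
    hc.injective.injOn
  simp only [Fin.card_Icc] at this
  have := hc.monotone h
  omega

theorem StrictMono.fin_val_add_sub_le_card {k m : ℕ} {c : Fin k → Fin m} (hc : StrictMono c)
    (a : Fin k) : (c a : ℕ) + (k - a) ≤ m := by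
  have hk : k - 1 < k := by have := a.isLt; omega
  have := hc.fin_val_add_sub_le (a := a) (b := ⟨k - 1, hk⟩) (Fin.le_def.2 (by simp only; omega))
  simp only at this
  omega

theorem Fin.card_strictMono (k m : ℕ) :
    Nat.card {c : Fin k → Fin m // StrictMono c} = m.choose k :=
  calc Nat.card {c : Fin k → Fin m // StrictMono c}
      = Nat.card (Fin k ↪o Fin m) :=
        Nat.card_congr ⟨fun c => OrderEmbedding.ofStrictMono c.1 c.2, fun e => ⟨e, e.strictMono⟩,
          fun _ => rfl, fun _ => rfl⟩
    _ = Nat.card (Set.powersetCard (Fin m) k) := Nat.card_congr Set.powersetCard.ofFinEmbEquiv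
    _ = m.choose k := by rw [Set.powersetCard.card, Nat.card_fin]

section PartialMap

variable {n p : ℕ}

noncomputable def pmapOf (x y : Fin p → Fin n) : Fin n → Option (Fin n) :=
  fun z => (partialInv x z).map y

section

variable {x : Fin p → Fin n} (hx : Injective x) (y : Fin p → Fin n)
include hx

theorem pmapOf_eq_some_iff {z b : Fin n} : pmapOf x y z = some b ↔ ∃ i, x i = z ∧ y i = b := by
  simp only [pmapOf, Option.map_eq_some_iff, hx.isPartialInv _ _]

theorem pmapOf_apply (i : Fin p) : pmapOf x y (x i) = some (y i) :=
  (pmapOf_eq_some_iff hx y).2 ⟨i, rfl, rfl⟩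

theorem forall_pmapOf_eq_some {P : Fin n → Fin n → Prop} :
    (∀ z b, pmapOf x y z = some b → P z b) ↔ ∀ i, P (x i) (y i) := by
  refine ⟨fun h i => h _ _ (pmapOf_apply hx y i), fun h z b hzb => ?_⟩
  obtain ⟨i, rfl, rfl⟩ := (pmapOf_eq_some_iff hx y).1 hzb
  exact h i

theorem forall₂_pmapOf_eq_some {P : Fin n → Fin n → Fin n → Fin n → Prop} :
    (∀ z w a b, pmapOf x y z = some a → pmapOf x y w = some b → P z w a b) ↔
      ∀ i j, P (x i) (x j) (y i) (y j) := by
  refine ⟨fun h i j => h _ _ _ _ (pmapOf_apply hx y i) (pmapOf_apply hx y j),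
    fun h z w a b hza hwb => ?_⟩
  obtain ⟨i, rfl, rfl⟩ := (pmapOf_eq_some_iff hx y).1 hza
  obtain ⟨j, rfl, rfl⟩ := (pmapOf_eq_some_iff hx y).1 hwb
  exact h i j

theorem pInj_pmapOf_iff : PInj (pmapOf x y) ↔ Injective y := by
  refine ⟨fun h i j hij => hx (h _ _ _ (pmapOf_apply hx y i) (hij ▸ pmapOf_apply hx y j)),
    fun hy z w b hz hw => ?_⟩
  obtain ⟨i, rfl, rfl⟩ := (pmapOf_eq_some_iff hx y).1 hz
  obtain ⟨j, rfl, hj⟩ := (pmapOf_eq_some_iff hx y).1 hw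
  rw [hy hj]

theorem ordPres_pmapOf_iff : OrdPres (pmapOf x y) ↔ ∀ i j, x i ≤ x j → y i ≤ y j :=
  forall₂_pmapOf_eq_some hx y

theorem ordDecr_pmapOf_iff : OrdDecr (pmapOf x y) ↔ ∀ i, y i ≤ x i :=
  forall_pmapOf_eq_some hx y

theorem contr_pmapOf_iff :
    Contr (pmapOf x y) ↔ ∀ i j, |(y i : ℤ) - y j| ≤ |(x i : ℤ) - x j| :=
  forall₂_pmapOf_eq_some hx y

theorem pheight_pmapOf (hy : Injective y) : pheight (pmapOf x y) = p := by
  have : pim (pmapOf x y) = Finset.univ.image y := by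
    ext b
    simp [pim, pmapOf_eq_some_iff hx]
  rw [pheight, this, Finset.card_image_of_injective _ hy, Finset.card_univ, Fintype.card_fin]

end

theorem exists_pmapOf_eq (f : Fin n → Option (Fin n)) :
    ∃ (k : ℕ) (x : Fin k → Fin n) (y : Fin k → Fin n), StrictMono x ∧ f = pmapOf x y := by
  set x := (pdom f).orderEmbOfFin rfl
  refine ⟨_, x, fun i => (f (x i)).getD (x i), x.strictMono,
    funext fun z => Option.ext fun b => ?_⟩
  rw [pmapOf_eq_some_iff x.injective]
  constructor
  · intro hzb
    have hz : z ∈ Set.range x := by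
      rw [Finset.range_orderEmbOfFin]
      simp [pdom, hzb]
    obtain ⟨i, rfl⟩ := hz
    exact ⟨i, rfl, by simp [hzb]⟩
  · rintro ⟨i, rfl, rfl⟩
    obtain ⟨b, hb⟩ := Option.isSome_iff_exists.1
      (Finset.mem_filter.1 (Finset.orderEmbOfFin_mem (pdom f) rfl i)).2
    rw [hb]
    rfl

theorem pmapOf_injective {x x' y y' : Fin p → Fin n} (hx : StrictMono x) (hx' : StrictMono x')
    (h : pmapOf x y = pmapOf x' y') : x = x' ∧ y = y' := by
  have mem_range_iff {x : Fin p → Fin n} (hx : StrictMono x) y z :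
      z ∈ Set.range x ↔ ∃ b, pmapOf x y z = some b := by
    simp [pmapOf_eq_some_iff hx.injective]
  obtain rfl : x = x' := (hx.range_inj hx').1 <| Set.ext fun z => by
    rw [mem_range_iff hx y, mem_range_iff hx' y', h]
  refine ⟨rfl, funext fun i => Option.some_injective _ ?_⟩
  rw [← pmapOf_apply hx.injective, h, pmapOf_apply hx.injective]

end PartialMap

theorem abs_sub_le_abs_sub_iff_monotone_sub {n p : ℕ} {x y : Fin p → Fin n}
    (hx : StrictMono x) (hy : StrictMono y) (hle : ∀ i, y i ≤ x i) :
    (∀ i j, |(y i : ℤ) - y j| ≤ |(x i : ℤ) - x j|) ↔ Monotone fun i => (x i : ℕ) - y i := by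
  have habs {i j} (hij : i ≤ j) :
      |(y i : ℤ) - y j| ≤ |(x i : ℤ) - x j| ↔ (x i : ℕ) - y i ≤ (x j : ℕ) - y j := by
    have := hx.monotone hij
    have := hy.monotone hij
    have := hle i
    have := hle j
    rw [abs_sub_comm, abs_of_nonneg (by omega), abs_sub_comm, abs_of_nonneg (by omega)]
    omega
  refine ⟨fun h i j hij => (habs hij).1 (h i j), fun h i j => ?_⟩
  rcases le_total i j with hij | hji
  · exact (habs hij).2 (h hij)
  · rw [abs_sub_comm, abs_sub_comm (x i : ℤ)]
    exact (habs hji).2 (h hji)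

/-- An element of `ODCI_n` of height `p`, recorded by its domain `dom` and image `img` listed
increasingly; being a contraction becomes monotonicity of the displacement `dom i - img i`. -/
@[ext]
structure ODCIPair (n p : ℕ) where
  dom : Fin p → Fin n
  img : Fin p → Fin n
  strictMono_dom : StrictMono dom
  strictMono_img : StrictMono img
  img_le_dom : ∀ i, img i ≤ dom i
  monotone_sub : Monotone fun i => (dom i : ℕ) - img i

namespace ODCIPair

variable {n p : ℕ}

def toFin (s : ODCIPair n p) : Fin (p + p) → Fin (n + p) :=
  Fin.append (fun i => Fin.castAdd p (s.img i))
    (fun k => ⟨n + k - (s.dom k.rev - s.img k.rev), by omega⟩)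

theorem strictMono_toFin (s : ODCIPair n p) : StrictMono s.toFin := by
  refine Fin.strictMono_append (fun i j hij => ?_) (fun k l hkl => ?_) (fun i k => ?_)
  · exact Fin.strictMono_castAdd p (s.strictMono_img hij)
  · have hmono : (s.dom l.rev : ℕ) - s.img l.rev ≤ s.dom k.rev - s.img k.rev :=
      s.monotone_sub (Fin.rev_le_rev.2 hkl.le)
    have := s.img_le_dom k.rev
    rw [Fin.lt_def] at hkl
    rw [Fin.mk_lt_mk]
    omega
  · have := s.img_le_dom k.rev
    have := s.img_le_dom i
    simp only [Fin.lt_def, Fin.val_castAdd]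
    rcases le_total i k.rev with h | h
    · have := s.strictMono_img.monotone h
      omega
    · have : (s.dom k.rev : ℕ) - s.img k.rev ≤ s.dom i - s.img i := s.monotone_sub h
      omega

def ofFin (c : Fin (p + p) → Fin (n + p)) (hc : StrictMono c) : ODCIPair n p where
  img i := ⟨c (Fin.castAdd p i), by
    have := hc.fin_val_add_sub_le_card (Fin.castAdd p i)
    simp only [Fin.val_castAdd] at this
    omega⟩
  dom i := ⟨c (Fin.castAdd p i) + (n + i.rev - c (Fin.natAdd p i.rev)), by
    have := hc.fin_val_add_sub_le (a := Fin.castAdd p i) (b := Fin.natAdd p i.rev)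
      (Fin.le_def.2 (by simp only [Fin.val_castAdd, Fin.val_natAdd]; omega))
    have := hc.fin_val_add_sub_le_card (Fin.natAdd p i.rev)
    simp only [Fin.val_castAdd, Fin.val_natAdd, Fin.val_rev] at *
    omega⟩
  strictMono_img i j h := Fin.mk_lt_mk.2 (hc (Fin.strictMono_castAdd p h))
  strictMono_dom i j h := by
    have := hc.fin_val_add_sub_le (a := Fin.castAdd p i) (b := Fin.castAdd p j)
      (Fin.le_def.2 (by simp only [Fin.val_castAdd]; omega))
    have := hc.fin_val_add_sub_le (a := Fin.natAdd p j.rev) (b := Fin.natAdd p i.rev)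
      (Fin.le_def.2 (by simp only [Fin.val_natAdd, Fin.val_rev]; omega))
    have := hc.fin_val_add_sub_le_card (Fin.natAdd p i.rev)
    rw [Fin.lt_def] at h
    rw [Fin.mk_lt_mk]
    simp only [Fin.val_castAdd, Fin.val_natAdd, Fin.val_rev] at *
    omega
  img_le_dom i := Fin.mk_le_mk.2 (Nat.le_add_right _ _)
  monotone_sub i j h := by
    have := hc.fin_val_add_sub_le (a := Fin.natAdd p j.rev) (b := Fin.natAdd p i.rev)
      (Fin.le_def.2 (by simp only [Fin.val_natAdd, Fin.val_rev]; omega))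
    have := hc.fin_val_add_sub_le_card (Fin.natAdd p i.rev)
    rw [Fin.le_def] at h
    simp only [Fin.val_natAdd, Fin.val_rev] at *
    omega

def equivStrictMono : ODCIPair n p ≃ {c : Fin (p + p) → Fin (n + p) // StrictMono c} where
  toFun s := ⟨s.toFin, s.strictMono_toFin⟩
  invFun c := ofFin c.1 c.2
  left_inv s := by
    ext i
    · have := s.img_le_dom i
      simp only [ofFin, toFin, Fin.append_left, Fin.append_right, Fin.val_castAdd, Fin.rev_rev,
        Fin.val_rev]
      omega
    · simp only [ofFin, toFin, Fin.append_left, Fin.val_castAdd]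
  right_inv c := by
    obtain ⟨c, hc⟩ := c
    ext a
    induction a using Fin.addCases with
    | left i => simp only [ofFin, toFin, Fin.append_left, Fin.val_castAdd]
    | right k =>
      have := hc.fin_val_add_sub_le_card (Fin.natAdd p k)
      simp only [ofFin, toFin, Fin.append_right, Fin.val_natAdd, Fin.rev_rev, Fin.val_rev] at *
      omega

noncomputable def toODCI (s : ODCIPair n p) :
    {f : Fin n → Option (Fin n) // PInj f ∧ Contr f ∧ OrdPres f ∧ OrdDecr f ∧ pheight f = p} := by
  have hx := s.strictMono_dom.injective
  refine ⟨pmapOf s.dom s.img, (pInj_pmapOf_iff hx _).2 s.strictMono_img.injective,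
    (contr_pmapOf_iff hx _).2 ((abs_sub_le_abs_sub_iff_monotone_sub s.strictMono_dom
      s.strictMono_img s.img_le_dom).2 s.monotone_sub),
    (ordPres_pmapOf_iff hx _).2 fun i j h => s.strictMono_img.monotone
      (s.strictMono_dom.le_iff_le.1 h),
    (ordDecr_pmapOf_iff hx _).2 s.img_le_dom,
    pheight_pmapOf hx _ s.strictMono_img.injective⟩

theorem toODCI_injective : Injective (toODCI : ODCIPair n p → _) := fun s t h => by
  obtain ⟨hdom, himg⟩ :=
    pmapOf_injective s.strictMono_dom t.strictMono_dom (congrArg Subtype.val h)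
  exact ODCIPair.ext hdom himg

theorem toODCI_surjective : Surjective (toODCI : ODCIPair n p → _) := by
  rintro ⟨f, hinj, hcontr, hpres, hdecr, hheight⟩
  obtain ⟨k, x, y, hx, rfl⟩ := exists_pmapOf_eq f
  rw [pInj_pmapOf_iff hx.injective] at hinj
  rw [contr_pmapOf_iff hx.injective] at hcontr
  rw [ordPres_pmapOf_iff hx.injective] at hpres
  rw [ordDecr_pmapOf_iff hx.injective] at hdecr
  obtain rfl := (pheight_pmapOf hx.injective y hinj).symm.trans hheight
  have hy : StrictMono y := fun i j h =>
    lt_of_le_of_ne (hpres i j (hx h).le) (hinj.ne h.ne)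
  exact ⟨⟨x, y, hx, hy, hdecr, (abs_sub_le_abs_sub_iff_monotone_sub hx hy hdecr).1 hcontr⟩, rfl⟩

end ODCIPair

/-- The number of elements of `ODCI_n` of height `p` equals `C(n+p, 2p)`. -/
theorem ODCI_count_of_height (n p : ℕ) :
    Nat.card {f : Fin n → Option (Fin n) //
        PInj f ∧ Contr f ∧ OrdPres f ∧ OrdDecr f ∧ pheight f = p} =
      (n + p).choose (2 * p) := by
  rw [← Nat.card_eq_of_bijective _ ⟨ODCIPair.toODCI_injective, ODCIPair.toODCI_surjective⟩,
    Nat.card_congr ODCIPair.equivStrictMono, Fin.card_strictMono, two_mul]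
end

section
/- Let F(n;p,m) denote the number of elements α ∈ ODCI_n with height h(α) = p and exactly m fixed points. If m = p, then F(n;p,m) = C(n,p). If m < p, then F(n;p,m) = C(n+p−m−1, 2p−m). -/
/-!
An element of `ODCI_n` of height `p` is determined by its domain `a₀ < ⋯ < a_{p-1}` and its
image `b₀ < ⋯ < b_{p-1}`, with `aᵢ ↦ bᵢ`. It is order-decreasing and a contraction exactly when
the gaps `dᵢ = aᵢ - bᵢ` are nonnegative and nondecreasing, so its `m` fixed points are
`a₀, …, a_{m-1}`. If `m = p` the map is a partial identity, determined by its domain: `C(n, p)`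
choices. If `m < p`, then `dₘ ≥ 1` and
`b₀ < ⋯ < b_{p-1} < b_{p-1} + dₘ < b_{p-1} + d_{m+1} + 1 < ⋯ < b_{p-1} + d_{p-1} + (p - 1 - m)`
is an arbitrary strictly increasing sequence of length `2p - m` in `{0, …, n + p - m - 2}`,
from which the map can be read back.
-/

open Finset Function

lemma Fin.mem_iff_val_lt_card_of_isLowerSet {k : ℕ} {s : Finset (Fin k)}
    (hs : IsLowerSet (s : Set (Fin k))) (i : Fin k) : i ∈ s ↔ (i : ℕ) < #s := by
  constructor
  · intro hi
    have := card_le_card fun j hj => hs (mem_Iic.1 hj) hi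
    rw [Fin.card_Iic] at this
    omega
  · intro hi
    by_contra hi'
    have := card_le_card fun j (hj : j ∈ s) =>
      mem_Iio.2 (lt_of_not_ge fun hij => hi' (hs hij hj))
    rw [Fin.card_Iio] at this
    omega

lemma Fin.val_add_sub_le_of_strictMono {k N : ℕ} {f : Fin k → Fin N} (hf : StrictMono f)
    {i j : Fin k} (hij : i ≤ j) : (f i : ℕ) + (j - i) ≤ f j := by
  have := card_le_card_of_injOn (s := Icc i j) (t := Icc (f i) (f j)) f
    (fun x hx => by
      obtain ⟨h₁, h₂⟩ := mem_Icc.1 (mem_coe.1 hx)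
      exact mem_coe.2 (mem_Icc.2 ⟨hf.monotone h₁, hf.monotone h₂⟩))
    hf.injective.injOn
  rw [Fin.card_Icc, Fin.card_Icc] at this
  have := hf.monotone hij
  rw [Fin.le_def] at this hij
  omega

lemma Nat.card_strictMono_fin (k : ℕ) (α : Type*) [LinearOrder α] :
    Nat.card {f : Fin k → α // StrictMono f} = (Nat.card α).choose k := by
  let e : {f : Fin k → α // StrictMono f} ≃ (Fin k ↪o α) :=
    { toFun f := OrderEmbedding.ofStrictMono f.1 f.2
      invFun f := ⟨f, f.strictMono⟩ }
  rw [Nat.card_congr (e.trans Set.powersetCard.ofFinEmbEquiv), Set.powersetCard.card]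

namespace ODCI

variable {n p m : ℕ}

section ofPair

noncomputable def ofPair (A B : Fin p → Fin n) (x : Fin n) : Option (Fin n) :=
  if h : ∃ i, A i = x then some (B h.choose) else none

variable {A B : Fin p → Fin n}

lemma ofPair_eq_some_iff (hA : Injective A) {x y : Fin n} :
    ofPair A B x = some y ↔ ∃ i, A i = x ∧ B i = y := by
  unfold ofPair
  split_ifs with h
  · refine ⟨fun hy => ⟨h.choose, h.choose_spec, Option.some_injective _ hy⟩, ?_⟩
    rintro ⟨i, rfl, rfl⟩
    rw [hA h.choose_spec]
  · simp only [false_iff, not_exists, not_and]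
    exact fun i hi => absurd ⟨i, hi⟩ h

lemma ofPair_apply (hA : Injective A) (i : Fin p) : ofPair A B (A i) = some (B i) :=
  (ofPair_eq_some_iff hA).2 ⟨i, rfl, rfl⟩

lemma ofPair_eq_none {x : Fin n} (h : x ∉ Set.range A) : ofPair A B x = none :=
  dif_neg h

lemma pInj_ofPair (hA : Injective A) (hB : Injective B) : PInj (ofPair A B) := by
  intro x y a hx hy
  obtain ⟨i, rfl, rfl⟩ := (ofPair_eq_some_iff hA).1 hx
  obtain ⟨j, rfl, hj⟩ := (ofPair_eq_some_iff hA).1 hy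
  rw [hB hj]

lemma ordPres_ofPair (hA : StrictMono A) (hB : Monotone B) : OrdPres (ofPair A B) := by
  intro x y a b hx hy hxy
  obtain ⟨i, rfl, rfl⟩ := (ofPair_eq_some_iff hA.injective).1 hx
  obtain ⟨j, rfl, rfl⟩ := (ofPair_eq_some_iff hA.injective).1 hy
  exact hB (hA.le_iff_le.1 hxy)

lemma ordDecr_ofPair_iff (hA : Injective A) : OrdDecr (ofPair A B) ↔ ∀ i, B i ≤ A i := by
  refine ⟨fun h i => h _ _ (ofPair_apply hA i), fun h x a hx => ?_⟩
  obtain ⟨i, rfl, rfl⟩ := (ofPair_eq_some_iff hA).1 hx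
  exact h i

lemma contr_ofPair_iff (hA : StrictMono A) (hB : Monotone B) :
    Contr (ofPair A B) ↔ Monotone fun i => ((A i : ℕ) : ℤ) - (B i : ℕ) := by
  constructor
  · intro h i j hij
    have hc := h _ _ _ _ (ofPair_apply hA.injective j) (ofPair_apply hA.injective i)
    have hAij : (A i : ℕ) ≤ A j := hA.monotone hij
    have hBij : (B i : ℕ) ≤ B j := hB hij
    rw [abs_of_nonneg (by omega), abs_of_nonneg (by omega)] at hc
    show ((A i : ℕ) : ℤ) - (B i : ℕ) ≤ ((A j : ℕ) : ℤ) - (B j : ℕ)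
    omega
  · intro h x y a b hx hy
    obtain ⟨i, rfl, rfl⟩ := (ofPair_eq_some_iff hA.injective).1 hx
    obtain ⟨j, rfl, rfl⟩ := (ofPair_eq_some_iff hA.injective).1 hy
    wlog hij : i ≤ j generalizing i j
    · rw [abs_sub_comm, abs_sub_comm ((A i : ℕ) : ℤ)]
      exact this j hy i hx (le_of_not_ge hij)
    have hAij : (A i : ℕ) ≤ A j := hA.monotone hij
    have hBij : (B i : ℕ) ≤ B j := hB hij
    have : ((A i : ℕ) : ℤ) - (B i : ℕ) ≤ ((A j : ℕ) : ℤ) - (B j : ℕ) := h hij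
    rw [abs_of_nonpos (by omega), abs_of_nonpos (by omega)]
    omega

lemma pheight_ofPair (hA : Injective A) (hB : Injective B) : pheight (ofPair A B) = p := by
  have him : pim (ofPair A B) = univ.image B := by
    ext y
    simp only [pim, mem_filter, mem_univ, true_and, mem_image, ofPair_eq_some_iff hA]
    exact ⟨fun ⟨_, i, _, hi⟩ => ⟨i, hi⟩, fun ⟨i, hi⟩ => ⟨A i, i, rfl, hi⟩⟩
  rw [pheight, him, card_image_of_injective _ hB, card_univ, Fintype.card_fin]

lemma pfix_ofPair (hA : Injective A) : pfix (ofPair A B) = #{i | A i = B i} := by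
  have hfix : ({x | ofPair A B x = some x} : Finset (Fin n)) = image A {i | A i = B i} := by
    ext x
    simp only [mem_filter, mem_univ, true_and, mem_image, ofPair_eq_some_iff hA]
    exact ⟨fun ⟨i, hix, hi⟩ => ⟨i, hix.trans hi.symm, hix⟩,
      fun ⟨i, hi, hix⟩ => ⟨i, hix, hi.symm.trans hix⟩⟩
  rw [pfix, hfix, card_image_of_injective _ hA]

lemma ofPair_inj {A' B' : Fin p → Fin n} (hA : StrictMono A) (hA' : StrictMono A')
    (h : ofPair A B = ofPair A' B') : A = A' ∧ B = B' := by
  have hAA' : A = A' := by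
    refine hA.range_inj hA' |>.1 (Set.ext fun x => ⟨?_, ?_⟩)
    · rintro ⟨i, rfl⟩
      obtain ⟨j, hj, -⟩ :=
        (ofPair_eq_some_iff hA'.injective).1 (h ▸ ofPair_apply hA.injective i)
      exact ⟨j, hj⟩
    · rintro ⟨i, rfl⟩
      obtain ⟨j, hj, -⟩ :=
        (ofPair_eq_some_iff hA.injective).1 (h ▸ ofPair_apply hA'.injective i)
      exact ⟨j, hj⟩
  subst hAA'
  refine ⟨rfl, funext fun i => Option.some_injective _ ?_⟩
  rw [← ofPair_apply hA.injective, h, ofPair_apply hA.injective]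

lemma exists_strictMono_eq_ofPair {f : Fin n → Option (Fin n)} (hinj : PInj f)
    (hord : OrdPres f) (hp : pheight f = p) :
    ∃ A B : Fin p → Fin n, StrictMono A ∧ StrictMono B ∧ f = ofPair A B := by
  let B := (pim f).orderEmbOfFin hp
  have hB_mem (i : Fin p) : ∃ x, f x = some (B i) :=
    (mem_filter.1 ((pim f).orderEmbOfFin_mem hp i)).2
  choose A hA using hB_mem
  have hAmono : StrictMono A := fun i j hij => lt_of_not_ge fun hji =>
    (B.strictMono hij).not_ge (hord _ _ _ _ (hA j) (hA i) hji)
  refine ⟨A, B, hAmono, B.strictMono, funext fun x => ?_⟩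
  cases hfx : f x with
  | none =>
    refine (ofPair_eq_none ?_).symm
    rintro ⟨i, rfl⟩
    simp [hA i] at hfx
  | some y =>
    have hy : y ∈ Set.range B := by
      simp only [B, Finset.range_orderEmbOfFin, pim, coe_filter, mem_univ, true_and]
      exact ⟨x, hfx⟩
    obtain ⟨i, rfl⟩ := hy
    rw [hinj _ _ _ hfx (hA i), ofPair_apply hAmono.injective]

end ofPair

/-- `A` and `B` list the domain and the image of an element of `ODCI_n` with `m` fixed points. -/
structure IsODCIPair (m : ℕ) (A B : Fin p → Fin n) : Prop where
  strictMono : StrictMono B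
  le : ∀ i, B i ≤ A i
  monotone_gap : Monotone fun i => ((A i : ℕ) : ℤ) - (B i : ℕ)
  card_fix : #{i | A i = B i} = m

namespace IsODCIPair

variable {A B : Fin p → Fin n} (h : IsODCIPair m A B)
include h

lemma gap_le {i j : Fin p} (hij : i ≤ j) :
    ((A i : ℕ) : ℤ) - (B i : ℕ) ≤ ((A j : ℕ) : ℤ) - (B j : ℕ) :=
  h.monotone_gap hij

lemma strictMono_dom : StrictMono A := fun i j hij => by
  have := h.gap_le hij.le
  have := h.strictMono hij
  rw [Fin.lt_def] at this ⊢
  omega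

lemma eq_iff_lt (i : Fin p) : A i = B i ↔ (i : ℕ) < m := by
  have hlower : IsLowerSet (↑({i | A i = B i} : Finset (Fin p)) : Set (Fin p)) := by
    intro i j hji hi
    simp only [coe_filter, mem_univ, true_and, Set.mem_ofPred_eq, Fin.ext_iff] at hi ⊢
    have := h.gap_le hji
    have := h.le j
    rw [Fin.le_def] at this
    omega
  rw [← h.card_fix, ← Fin.mem_iff_val_lt_card_of_isLowerSet hlower, mem_filter,
    and_iff_right (mem_univ i)]

end IsODCIPair

lemma IsODCIPair.isODCI_ofPair {A B : Fin p → Fin n} (h : IsODCIPair m A B) :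
    PInj (ofPair A B) ∧ Contr (ofPair A B) ∧ OrdPres (ofPair A B) ∧ OrdDecr (ofPair A B) ∧
      pheight (ofPair A B) = p ∧ pfix (ofPair A B) = m :=
  have hA := h.strictMono_dom
  ⟨pInj_ofPair hA.injective h.strictMono.injective,
    (contr_ofPair_iff hA h.strictMono.monotone).2 h.monotone_gap,
    ordPres_ofPair hA h.strictMono.monotone, (ordDecr_ofPair_iff hA.injective).2 h.le,
    pheight_ofPair hA.injective h.strictMono.injective,
    (pfix_ofPair hA.injective).trans h.card_fix⟩

theorem card_odci_eq_card_pairs (n p m : ℕ) :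
    Nat.card {f : Fin n → Option (Fin n) //
      PInj f ∧ Contr f ∧ OrdPres f ∧ OrdDecr f ∧ pheight f = p ∧ pfix f = m} =
    Nat.card {AB : (Fin p → Fin n) × (Fin p → Fin n) // IsODCIPair m AB.1 AB.2} := by
  refine (Nat.card_congr (Equiv.ofBijective
    (fun AB => ⟨ofPair AB.1.1 AB.1.2, AB.2.isODCI_ofPair⟩) ⟨?_, ?_⟩)).symm
  · rintro ⟨⟨A, B⟩, h⟩ ⟨⟨A', B'⟩, h'⟩ hAB
    obtain ⟨rfl, rfl⟩ :=
      ofPair_inj h.strictMono_dom h'.strictMono_dom (congrArg Subtype.val hAB)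
    rfl
  · rintro ⟨f, hinj, hcontr, hord, hdecr, hp, rfl⟩
    obtain ⟨A, B, hA, hB, rfl⟩ := exists_strictMono_eq_ofPair hinj hord hp
    exact ⟨⟨(A, B), hB, (ordDecr_ofPair_iff hA.injective).1 hdecr,
      (contr_ofPair_iff hA hB.monotone).1 hcontr, (pfix_ofPair hA.injective).symm⟩, rfl⟩

noncomputable def pairsEquivOfEq :
    {AB : (Fin p → Fin n) × (Fin p → Fin n) // IsODCIPair p AB.1 AB.2} ≃
      {B : Fin p → Fin n // StrictMono B} where
  toFun AB := ⟨AB.1.2, AB.2.strictMono⟩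
  invFun B := ⟨(B, B), B.2, fun _ => le_rfl, fun _ _ _ => by simp,
    by rw [filter_true_of_mem fun _ _ => rfl, card_univ, Fintype.card_fin]⟩
  left_inv := by
    rintro ⟨⟨A, B⟩, h⟩
    obtain rfl : A = B := funext fun i => (h.eq_iff_lt i).2 i.2
    rfl

-- Reading tuples as `ℕ`-sequences lets `omega` handle the index arithmetic below.
def natSeq {k N : ℕ} (C : Fin k → Fin N) (t : ℕ) : ℕ :=
  if h : t < k then C ⟨t, h⟩ else 0

section natSeq

variable {k N s t : ℕ} {C : Fin k → Fin N}

lemma natSeq_of_lt (C : Fin k → Fin N) (h : t < k) : natSeq C t = C ⟨t, h⟩ :=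
  dif_pos h

lemma natSeq_mk {f : ℕ → ℕ} (hf : ∀ i : Fin k, f i < N) (h : t < k) :
    natSeq (fun i => ⟨f i, hf i⟩ : Fin k → Fin N) t = f t :=
  dif_pos h

lemma natSeq_val (C : Fin k → Fin N) (i : Fin k) : natSeq C i = C i :=
  natSeq_of_lt C i.2

lemma natSeq_ext {C' : Fin k → Fin N} (h : ∀ t < k, natSeq C t = natSeq C' t) :
    C = C' :=
  funext fun i => Fin.ext <| by rw [← natSeq_val, ← natSeq_val, h i i.2]

lemma natSeq_lt (C : Fin k → Fin N) (h : t < k) : natSeq C t < N := by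
  rw [natSeq_of_lt C h]
  exact Fin.isLt _

lemma natSeq_add_sub_le_of_strictMono (hC : StrictMono C) (hst : s ≤ t) (ht : t < k) :
    natSeq C s + (t - s) ≤ natSeq C t := by
  rw [natSeq_of_lt C (hst.trans_lt ht), natSeq_of_lt C ht]
  exact Fin.val_add_sub_le_of_strictMono hC (Fin.mk_le_mk.2 hst)

end natSeq

namespace IsODCIPair

variable {A B : Fin p → Fin n} {s t : ℕ} (h : IsODCIPair m A B)
include h

lemma natSeq_image_lt (hst : s < t) (ht : t < p) : natSeq B s < natSeq B t := by
  rw [natSeq_of_lt B (hst.trans ht), natSeq_of_lt B ht]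
  exact h.strictMono (Fin.mk_lt_mk.2 hst)

lemma natSeq_le (ht : t < p) : natSeq B t ≤ natSeq A t := by
  rw [natSeq_of_lt B ht, natSeq_of_lt A ht]
  exact h.le _

lemma natSeq_gap_le (hst : s ≤ t) (ht : t < p) :
    natSeq A s + natSeq B t ≤ natSeq A t + natSeq B s := by
  have := h.gap_le (Fin.mk_le_mk.2 hst : (⟨s, hst.trans_lt ht⟩ : Fin p) ≤ ⟨t, ht⟩)
  rw [natSeq_of_lt B ht, natSeq_of_lt A ht, natSeq_of_lt A (hst.trans_lt ht),
    natSeq_of_lt B (hst.trans_lt ht)]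
  omega

lemma natSeq_eq_iff (ht : t < p) : natSeq A t = natSeq B t ↔ t < m := by
  rw [natSeq_of_lt B ht, natSeq_of_lt A ht, ← Fin.ext_iff, h.eq_iff_lt]

end IsODCIPair

def encodeSeq (p m : ℕ) (a b : ℕ → ℕ) (t : ℕ) : ℕ :=
  if t < p then b t else b (p - 1) + (a (m + t - p) - b (m + t - p)) + (t - p)

def decodeDomSeq (p m : ℕ) (c : ℕ → ℕ) (t : ℕ) : ℕ :=
  if t < m then c t else c t + c (p + t - m) - c (p - 1) - (t - m)

section Seq

variable {a b c : ℕ → ℕ} {t : ℕ}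

lemma encodeSeq_of_lt (ht : t < p) : encodeSeq p m a b t = b t := if_pos ht

lemma encodeSeq_of_le (ht : p ≤ t) :
    encodeSeq p m a b t = b (p - 1) + (a (m + t - p) - b (m + t - p)) + (t - p) :=
  if_neg ht.not_gt

lemma decodeDomSeq_of_lt (ht : t < m) : decodeDomSeq p m c t = c t := if_pos ht

lemma decodeDomSeq_of_le (ht : m ≤ t) :
    decodeDomSeq p m c t = c t + c (p + t - m) - c (p - 1) - (t - m) :=
  if_neg ht.not_gt

end Seq

section Encode

variable {A B : Fin p → Fin n} (h : IsODCIPair m A B) (hmp : m < p)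
include h hmp

lemma encodeSeq_lt {t : ℕ} (ht : t < 2 * p - m) :
    encodeSeq p m (natSeq A) (natSeq B) t < n + p - m - 1 := by
  have hlast := natSeq_lt A (show p - 1 < p by omega)
  rcases lt_or_ge t p with htp | htp
  · have := natSeq_lt B htp
    rw [encodeSeq_of_lt htp]
    omega
  · have := h.natSeq_gap_le (show m + t - p ≤ p - 1 by omega) (by omega)
    have := h.natSeq_le (show m + t - p < p by omega)
    rw [encodeSeq_of_le htp]
    omega

lemma encodeSeq_strictMono {s t : ℕ} (hst : s < t) (ht : t < 2 * p - m) :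
    encodeSeq p m (natSeq A) (natSeq B) s < encodeSeq p m (natSeq A) (natSeq B) t := by
  rcases lt_or_ge t p with htp | htp
  · rw [encodeSeq_of_lt htp, encodeSeq_of_lt (hst.trans htp)]
    exact h.natSeq_image_lt hst htp
  have hk : m + t - p < p := by omega
  have := h.natSeq_le hk
  rw [encodeSeq_of_le htp]
  rcases lt_or_ge s p with hsp | hsp
  · have := (h.natSeq_eq_iff hk).not.2 (by omega)
    rw [encodeSeq_of_lt hsp]
    rcases (show s ≤ p - 1 by omega).eq_or_lt with rfl | hs
    · omega
    · have := h.natSeq_image_lt hs (by omega)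
      omega
  · have := h.natSeq_gap_le (show m + s - p ≤ m + t - p by omega) hk
    have := h.natSeq_le (show m + s - p < p by omega)
    rw [encodeSeq_of_le hsp]
    omega

def encode : Fin (2 * p - m) → Fin (n + p - m - 1) :=
  fun i => ⟨encodeSeq p m (natSeq A) (natSeq B) i, encodeSeq_lt h hmp i.2⟩

lemma strictMono_encode : StrictMono (encode h hmp) :=
  fun _ j hij => encodeSeq_strictMono h hmp hij j.2

lemma natSeq_encode {t : ℕ} (ht : t < 2 * p - m) :
    natSeq (encode h hmp) t = encodeSeq p m (natSeq A) (natSeq B) t :=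
  natSeq_mk _ ht

end Encode

section Decode

variable {g : Fin (2 * p - m) → Fin (n + p - m - 1)} (hg : StrictMono g) (hmp : m < p)
include hg hmp

lemma natSeq_lt_of_lt_height {t : ℕ} (ht : t < p) : natSeq g t < n := by
  have := natSeq_add_sub_le_of_strictMono hg (show t ≤ 2 * p - m - 1 by omega) (by omega)
  have := natSeq_lt g (show 2 * p - m - 1 < 2 * p - m by omega)
  omega

lemma natSeq_add_lt_of_le {t : ℕ} (hmt : m ≤ t) (ht : t < p) :
    natSeq g (p - 1) + (t - m) < natSeq g (p + t - m) := by
  have := natSeq_add_sub_le_of_strictMono hg (show p - 1 ≤ p + t - m by omega) (by omega)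
  omega

lemma decodeDomSeq_lt {t : ℕ} (ht : t < p) : decodeDomSeq p m (natSeq g) t < n := by
  have := natSeq_lt_of_lt_height hg hmp ht
  rcases lt_or_ge t m with htm | htm
  · rwa [decodeDomSeq_of_lt htm]
  · have := natSeq_add_sub_le_of_strictMono hg (show t ≤ p - 1 by omega) (by omega)
    have := natSeq_add_sub_le_of_strictMono hg
      (show p + t - m ≤ 2 * p - m - 1 by omega) (by omega)
    have := natSeq_lt g (show 2 * p - m - 1 < 2 * p - m by omega)
    rw [decodeDomSeq_of_le htm]
    omega

def decodeDom : Fin p → Fin n :=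
  fun i => ⟨decodeDomSeq p m (natSeq g) i, decodeDomSeq_lt hg hmp i.2⟩

def decodeImage : Fin p → Fin n :=
  fun i => ⟨natSeq g i, natSeq_lt_of_lt_height hg hmp i.2⟩

lemma natSeq_decodeDom {t : ℕ} (ht : t < p) :
    natSeq (decodeDom hg hmp) t = decodeDomSeq p m (natSeq g) t :=
  natSeq_mk _ ht

lemma natSeq_decodeImage {t : ℕ} (ht : t < p) : natSeq (decodeImage hg hmp) t = natSeq g t :=
  natSeq_mk _ ht

lemma isODCIPair_decode : IsODCIPair m (decodeDom hg hmp) (decodeImage hg hmp) where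
  strictMono i j hij := by
    have := natSeq_add_sub_le_of_strictMono hg hij.le (by omega)
    rw [Fin.lt_def] at hij ⊢
    dsimp only [decodeImage]
    omega
  le i := by
    rw [Fin.le_def]
    dsimp only [decodeDom, decodeImage]
    rcases lt_or_ge (i : ℕ) m with him | him
    · exact (decodeDomSeq_of_lt him).ge
    · have := natSeq_add_lt_of_le hg hmp him i.2
      rw [decodeDomSeq_of_le him]
      omega
  monotone_gap i j hij := by
    rw [Fin.le_def] at hij
    dsimp only [decodeDom, decodeImage]
    rcases lt_or_ge (j : ℕ) m with hjm | hjm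
    · rw [decodeDomSeq_of_lt hjm, decodeDomSeq_of_lt (by omega)]
      omega
    have := natSeq_add_lt_of_le hg hmp hjm j.2
    rw [decodeDomSeq_of_le hjm]
    rcases lt_or_ge (i : ℕ) m with him | him
    · rw [decodeDomSeq_of_lt him]
      omega
    · have := natSeq_add_lt_of_le hg hmp him i.2
      have := natSeq_add_sub_le_of_strictMono hg (show p + i - m ≤ p + j - m by omega) (by omega)
      rw [decodeDomSeq_of_le him]
      omega
  card_fix := by
    have hfix (i : Fin p) : decodeDom hg hmp i = decodeImage hg hmp i ↔ (i : ℕ) < m := by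
      refine ⟨fun hi => by_contra fun him => ?_, fun him => Fin.ext (decodeDomSeq_of_lt him)⟩
      have := natSeq_add_lt_of_le hg hmp (not_lt.1 him) i.2
      have := congrArg Fin.val hi
      dsimp only [decodeDom, decodeImage] at this
      rw [decodeDomSeq_of_le (not_lt.1 him)] at this
      omega
    simp only [hfix, Fin.card_filter_val_lt, min_eq_right hmp.le]

end Decode

lemma decodeImage_encode {A B : Fin p → Fin n} (h : IsODCIPair m A B) (hmp : m < p) :
    decodeImage (strictMono_encode h hmp) hmp = B :=
  natSeq_ext fun t ht => by
    rw [natSeq_decodeImage _ _ ht, natSeq_encode _ _ (by omega), encodeSeq_of_lt ht]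

lemma decodeDom_encode {A B : Fin p → Fin n} (h : IsODCIPair m A B) (hmp : m < p) :
    decodeDom (strictMono_encode h hmp) hmp = A :=
  natSeq_ext fun t ht => by
    rw [natSeq_decodeDom _ _ ht]
    rcases lt_or_ge t m with htm | htm
    · rw [decodeDomSeq_of_lt htm, natSeq_encode _ _ (by omega), encodeSeq_of_lt ht]
      exact ((h.natSeq_eq_iff ht).2 htm).symm
    · have := h.natSeq_le ht
      rw [decodeDomSeq_of_le htm, natSeq_encode _ _ (by omega), natSeq_encode _ _ (by omega),
        natSeq_encode _ _ (by omega), encodeSeq_of_lt ht, encodeSeq_of_lt (t := p - 1) (by omega),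
        encodeSeq_of_le (t := p + t - m) (by omega), show m + (p + t - m) - p = t by omega]
      omega

lemma encode_decode {g : Fin (2 * p - m) → Fin (n + p - m - 1)} (hg : StrictMono g)
    (hmp : m < p) : encode (isODCIPair_decode hg hmp) hmp = g :=
  natSeq_ext fun t ht => by
    rw [natSeq_encode _ _ ht]
    rcases lt_or_ge t p with htp | htp
    · rw [encodeSeq_of_lt htp, natSeq_decodeImage hg hmp htp]
    · have hk : m + t - p < p := by omega
      have := natSeq_add_lt_of_le hg hmp (show m ≤ m + t - p by omega) hk
      rw [show p + (m + t - p) - m = t by omega] at this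
      rw [encodeSeq_of_le htp, natSeq_decodeImage hg hmp (by omega),
        natSeq_decodeImage hg hmp hk, natSeq_decodeDom hg hmp hk, decodeDomSeq_of_le (by omega),
        show p + (m + t - p) - m = t by omega]
      omega

noncomputable def pairsEquivOfLt (hmp : m < p) :
    {AB : (Fin p → Fin n) × (Fin p → Fin n) // IsODCIPair m AB.1 AB.2} ≃
      {g : Fin (2 * p - m) → Fin (n + p - m - 1) // StrictMono g} where
  toFun AB := ⟨encode AB.2 hmp, strictMono_encode AB.2 hmp⟩
  invFun g := ⟨(decodeDom g.2 hmp, decodeImage g.2 hmp), isODCIPair_decode g.2 hmp⟩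
  left_inv := by
    rintro ⟨⟨A, B⟩, h⟩
    ext1
    exact Prod.ext (decodeDom_encode h hmp) (decodeImage_encode h hmp)
  right_inv g := Subtype.ext (encode_decode g.2 hmp)

end ODCI

/-- The number of elements of `ODCI_n` of height `p` with exactly `m` fixed points:
`C(n,p)` if `m = p`, and `C(n+p-m-1, 2p-m)` if `m < p`. -/
theorem ODCI_count_of_height_and_fix (n p m : ℕ) :
    (m = p → Nat.card {f : Fin n → Option (Fin n) //
        PInj f ∧ Contr f ∧ OrdPres f ∧ OrdDecr f ∧ pheight f = p ∧ pfix f = m} =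
      n.choose p) ∧
    (m < p → Nat.card {f : Fin n → Option (Fin n) //
        PInj f ∧ Contr f ∧ OrdPres f ∧ OrdDecr f ∧ pheight f = p ∧ pfix f = m} =
      (n + p - m - 1).choose (2 * p - m)) := by
  refine ⟨?_, fun hmp => ?_⟩
  · rintro rfl
    rw [ODCI.card_odci_eq_card_pairs, Nat.card_congr ODCI.pairsEquivOfEq,
      Nat.card_strictMono_fin, Nat.card_fin]
  · rw [ODCI.card_odci_eq_card_pairs, Nat.card_congr (ODCI.pairsEquivOfLt hmp),
      Nat.card_strictMono_fin, Nat.card_fin]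
end

section
/- For every natural number n, the number of order-preserving, order-decreasing partial injective contractions of X_n = {1,…,n} equals the Fibonacci number F_{2n+1}; that is, |ODCI_n| = F_{2n+1}. -/
namespace ODCI

open Finset

open scoped Classical

variable {n : ℕ}

def IsODCI (f : Fin n → Option (Fin n)) : Prop :=
  PInj f ∧ Contr f ∧ OrdPres f ∧ OrdDecr f

theorem isODCI_iff {f : Fin n → Option (Fin n)} :
    IsODCI f ↔ (∀ x a, f x = some a → a.val ≤ x.val) ∧
      ∀ x y a b, f x = some a → f y = some b → x.val < y.val →
        a.val < b.val ∧ x.val + b.val ≤ y.val + a.val := by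
  constructor
  · rintro ⟨hinj, hcon, hpres, hdec⟩
    refine ⟨hdec, fun x y a b hx hy hxy => ?_⟩
    have hab : a.val ≤ b.val := hpres x y a b hx hy hxy.le
    have hne : a.val ≠ b.val := fun h =>
      hxy.ne (congrArg Fin.val (hinj x y a hx (Fin.ext h ▸ hy)))
    have hcxy := hcon x y a b hx hy
    rw [abs_sub_comm, abs_of_pos (by omega), abs_sub_comm, abs_of_pos (by omega)] at hcxy
    omega
  · rintro ⟨hdec, hmono⟩
    have hfun {x y a b} (hx : f x = some a) (hy : f y = some b) (h : x = y) : a = b :=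
      Option.some.inj (hx.symm.trans (h ▸ hy))
    refine ⟨fun x y a hx hy => ?_, fun x y a b hx hy => ?_, fun x y a b hx hy hxy => ?_, hdec⟩
    · by_contra hne
      rcases Fin.lt_or_lt_of_ne hne with h | h
      · exact (hmono x y a a hx hy h).1.false
      · exact (hmono y x a a hy hx h).1.false
    · rcases lt_trichotomy x.val y.val with h | h | h
      · have := hmono x y a b hx hy h
        rw [abs_sub_comm, abs_of_pos (by omega), abs_sub_comm, abs_of_pos (by omega)]
        omega
      · simp [hfun hx hy (Fin.ext h), h]
      · have := hmono y x b a hy hx h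
        rw [abs_of_pos (by omega), abs_of_pos (by omega)]
        omega
    · rcases hxy.lt_or_eq with h | h
      · exact (hmono x y a b hx hy h).1.le
      · exact (hfun hx hy h).le

theorem IsODCI.defect_mono {f : Fin n → Option (Fin n)} (hf : IsODCI f) {x y a b : Fin n}
    (hx : f x = some a) (hy : f y = some b) (hxy : x.val ≤ y.val) :
    a.val ≤ b.val ∧ x.val + b.val ≤ y.val + a.val := by
  rcases hxy.lt_or_eq with h | h
  · have := (isODCI_iff.mp hf).2 x y a b hx hy h
    omega
  · obtain rfl := Fin.ext h
    obtain rfl := Option.some.inj (hx.symm.trans hy)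
    omega

noncomputable def odci (n : ℕ) : Finset (Fin n → Option (Fin n)) := {f | IsODCI f}

@[simp] theorem mem_odci {f : Fin n → Option (Fin n)} : f ∈ odci n ↔ IsODCI f := by
  simp [odci]

theorem card_odci (n : ℕ) : Nat.card {f : Fin n → Option (Fin n) // IsODCI f} = #(odci n) := by
  rw [Nat.card_eq_fintype_card, Fintype.card_subtype, odci]

def psnoc (f : Fin n → Option (Fin n)) (v : Option (Fin (n + 1))) :
    Fin (n + 1) → Option (Fin (n + 1)) :=
  Fin.snoc (fun x => (f x).map Fin.castSucc) v

@[simp] theorem psnoc_castSucc (f : Fin n → Option (Fin n)) (v : Option (Fin (n + 1)))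
    (x : Fin n) : psnoc f v x.castSucc = (f x).map Fin.castSucc := by
  simp [psnoc]

@[simp] theorem psnoc_last (f : Fin n → Option (Fin n)) (v : Option (Fin (n + 1))) :
    psnoc f v (Fin.last n) = v := by
  simp [psnoc]

theorem psnoc_eq_some {f : Fin n → Option (Fin n)} {v : Option (Fin (n + 1))}
    {x c : Fin (n + 1)} :
    psnoc f v x = some c ↔
      (x = Fin.last n ∧ v = some c) ∨
        ∃ i b, f i = some b ∧ x = i.castSucc ∧ c = b.castSucc := by
  induction x using Fin.lastCases with
  | last => simp [(Fin.castSucc_lt_last _).ne']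
  | cast i => simp [(Fin.castSucc_lt_last _).ne, eq_comm]

def pinit (F : Fin (n + 1) → Option (Fin (n + 1))) : Fin n → Option (Fin n) :=
  fun x => (F x.castSucc).bind (Fin.lastCases none some)

theorem pinit_psnoc (f : Fin n → Option (Fin n)) (v : Option (Fin (n + 1))) :
    pinit (psnoc f v) = f := by
  funext x
  cases h : f x <;> simp [pinit, h]

theorem psnoc_pinit {F : Fin (n + 1) → Option (Fin (n + 1))} (hF : OrdDecr F) :
    psnoc (pinit F) (F (Fin.last n)) = F := by
  funext x
  induction x using Fin.lastCases with
  | last => simp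
  | cast x =>
    cases hx : F x.castSucc with
    | none => simp [pinit, hx]
    | some a =>
      have ha : a ≠ Fin.last n := ((hF _ _ hx).trans_lt (Fin.castSucc_lt_last x)).ne
      obtain ⟨a, rfl⟩ := Fin.exists_castSucc_eq.mpr ha
      simp [pinit, hx]

def SnocCompatible (f : Fin n → Option (Fin n)) (v : Option (Fin (n + 1))) : Prop :=
  ∀ a ∈ v, ∀ x b, f x = some b → b.val < a.val ∧ x.val + a.val ≤ n + b.val

theorem isODCI_psnoc_iff {f : Fin n → Option (Fin n)} {v : Option (Fin (n + 1))} :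
    IsODCI (psnoc f v) ↔ IsODCI f ∧ SnocCompatible f v := by
  simp only [isODCI_iff]
  constructor
  · rintro ⟨hdec, hmono⟩
    refine ⟨⟨fun x a hx => ?_, fun x y a b hx hy hxy => ?_⟩, fun a ha x b hx => ?_⟩
    · simpa using hdec x.castSucc a.castSucc (by simp [hx])
    · simpa using hmono x.castSucc y.castSucc a.castSucc b.castSucc (by simp [hx]) (by simp [hy])
        (by simpa using hxy)
    · simpa using hmono x.castSucc (Fin.last n) b.castSucc a (by simp [hx]) (by simpa using ha)
        (by simp)
  · rintro ⟨⟨hdec, hmono⟩, hcompat⟩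
    refine ⟨fun x a hx => ?_, fun x y a b hx hy hxy => ?_⟩
    · rcases psnoc_eq_some.mp hx with ⟨rfl, -⟩ | ⟨i, b, hi, rfl, rfl⟩
      · exact a.is_le
      · simpa using hdec i b hi
    · rcases psnoc_eq_some.mp hx with ⟨rfl, -⟩ | ⟨i, c, hi, rfl, rfl⟩
      · exact absurd hxy (by simpa using y.is_le)
      rcases psnoc_eq_some.mp hy with ⟨rfl, hv⟩ | ⟨j, d, hj, rfl, rfl⟩
      · simpa using hcompat b hv i c hi
      · simpa using hmono i j c d hi hj (by simpa using hxy)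

theorem sum_odci_succ {M : Type*} [AddCommMonoid M]
    (φ : (Fin (n + 1) → Option (Fin (n + 1))) → M) :
    ∑ F ∈ odci (n + 1), φ F =
      ∑ f ∈ odci n, ∑ v with SnocCompatible f v, φ (psnoc f v) := by
  rw [← sum_finset_product' {p | IsODCI p.1 ∧ SnocCompatible p.1 p.2} _ _ (by simp)]
  refine sum_nbij' (fun F => (pinit F, F (Fin.last n))) (fun p => psnoc p.1 p.2) ?_ ?_ ?_ ?_ ?_
  · intro F hF
    rw [mem_odci] at hF
    simpa [← isODCI_psnoc_iff, psnoc_pinit hF.2.2.2] using hF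
  · simp [isODCI_psnoc_iff]
  · exact fun F hF => psnoc_pinit (mem_odci.mp hF).2.2.2
  · simp [pinit_psnoc]
  · exact fun F hF => by rw [psnoc_pinit (mem_odci.mp hF).2.2.2]

theorem sum_snocCompatible {M : Type*} [AddCommMonoid M] (f : Fin n → Option (Fin n))
    (g : Option (Fin (n + 1)) → M) :
    ∑ v with SnocCompatible f v, g v =
      g none + ∑ a with SnocCompatible f (some a), g (some a) := by
  simp [sum_filter, Fintype.sum_option, SnocCompatible]

def maxDefect (f : Fin n → Option (Fin n)) : ℕ :=
  univ.sup fun x => (f x).elim 0 fun b => x.val - b.val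

theorem defect_le_maxDefect {f : Fin n → Option (Fin n)} {x b : Fin n} (hx : f x = some b) :
    x.val - b.val ≤ maxDefect f := by
  simpa only [maxDefect, hx, Option.elim_some] using
    le_sup (f := fun x => (f x).elim 0 fun b => x.val - b.val) (mem_univ x)

theorem maxDefect_eq_zero_or_exists (f : Fin n → Option (Fin n)) :
    maxDefect f = 0 ∨ ∃ x b, f x = some b ∧ maxDefect f = x.val - b.val := by
  rcases (univ : Finset (Fin n)).eq_empty_or_nonempty with h | h
  · simp [maxDefect, h]
  obtain ⟨x, -, hx⟩ := exists_mem_eq_sup _ h fun x => (f x).elim 0 fun b => x.val - b.val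
  cases hfx : f x with
  | none => simp_all [maxDefect]
  | some b => exact .inr ⟨x, b, hfx, by simpa only [maxDefect, hfx, Option.elim_some] using hx⟩

theorem snocCompatible_some_iff {f : Fin n → Option (Fin n)} (hf : IsODCI f)
    {a : Fin (n + 1)} : SnocCompatible f (some a) ↔
      a.val + maxDefect f ≤ n ∧ ∀ x b, f x = some b → x.val < a.val + maxDefect f := by
  have hdec := (isODCI_iff.mp hf).1
  simp only [SnocCompatible, Option.mem_def, Option.some.injEq, forall_eq']
  constructor
  · intro h
    refine ⟨?_, fun x b hx => ?_⟩
    · rcases maxDefect_eq_zero_or_exists f with hd | ⟨x, b, hx, hd⟩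
      · have := a.is_le
        omega
      · have := h x b hx
        have := hdec x b hx
        omega
    · have := h x b hx
      have := defect_le_maxDefect hx
      omega
  · rintro ⟨hle, hlt⟩ x b hx
    have := defect_le_maxDefect hx
    have := hdec x b hx
    have := hlt x b hx
    refine ⟨?_, by omega⟩
    rcases maxDefect_eq_zero_or_exists f with hd | ⟨y, c, hy, hd⟩
    · omega
    -- `y` has the largest defect: points left of it have smaller images, points right of it
    -- have the same defect.
    · have := hlt y c hy
      have := hdec y c hy
      rcases le_total x.val y.val with hxy | hxy
      · have := hf.defect_mono hx hy hxy
        omega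
      · have := hf.defect_mono hy hx hxy
        omega

def slack (f : Fin n → Option (Fin n)) : ℕ :=
  #{t : Fin (n + 1) | ∀ x b, f x = some b → x.val < t.val}

theorem card_snocCompatible_some {f : Fin n → Option (Fin n)} (hf : IsODCI f) :
    #{a : Fin (n + 1) | SnocCompatible f (some a)} = slack f := by
  simp only [snocCompatible_some_iff hf, slack]
  refine card_bij (fun a ha => ⟨a.val + maxDefect f, by simp only [mem_filter, mem_univ, true_and] at ha; omega⟩) ?_ ?_ ?_
  · intro a ha
    simp only [mem_filter, mem_univ, true_and] at ha ⊢
    exact ha.2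
  · intro a _ b _ h
    simpa [Fin.ext_iff] using h
  · intro t ht
    simp only [mem_filter, mem_univ, true_and] at ht
    have hd : maxDefect f ≤ t.val := by
      rcases maxDefect_eq_zero_or_exists f with hd | ⟨x, b, hx, hd⟩
      · omega
      · have := ht x b hx
        omega
    refine ⟨⟨t.val - maxDefect f, by omega⟩, ?_, Fin.ext (Nat.sub_add_cancel hd)⟩
    simp only [mem_filter, mem_univ, true_and]
    refine ⟨by omega, fun x b hx => ?_⟩
    have := ht x b hx
    omega

theorem forall_psnoc_eq_some_lt {f : Fin n → Option (Fin n)} {v : Option (Fin (n + 1))}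
    {m : ℕ} : (∀ x b, psnoc f v x = some b → x.val < m) ↔
      (∀ x b, f x = some b → x.val < m) ∧ (v = none ∨ n < m) := by
  rw [Fin.forall_fin_succ']
  cases v <;> simp

theorem slack_psnoc_none (f : Fin n → Option (Fin n)) : slack (psnoc f none) = slack f + 1 := by
  simp only [slack, card_filter, Fin.sum_univ_castSucc (n := n + 1), forall_psnoc_eq_some_lt]
  simp

theorem slack_psnoc_some (f : Fin n → Option (Fin n)) (a : Fin (n + 1)) :
    slack (psnoc f (some a)) = 1 := by
  simp only [slack, card_filter, Fin.sum_univ_castSucc (n := n + 1), forall_psnoc_eq_some_lt]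
  simp [Fin.is_le]

theorem card_odci_succ (n : ℕ) : #(odci (n + 1)) = #(odci n) + ∑ f ∈ odci n, slack f := by
  rw [card_eq_sum_ones, sum_odci_succ, card_eq_sum_ones, ← sum_add_distrib]
  refine sum_congr rfl fun f hf => ?_
  rw [sum_snocCompatible, ← card_eq_sum_ones, card_snocCompatible_some (mem_odci.mp hf)]

theorem sum_slack_odci_succ (n : ℕ) :
    ∑ F ∈ odci (n + 1), slack F = #(odci n) + 2 * ∑ f ∈ odci n, slack f := by
  rw [sum_odci_succ, card_eq_sum_ones, mul_sum, ← sum_add_distrib]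
  refine sum_congr rfl fun f hf => ?_
  simp only [sum_snocCompatible, slack_psnoc_none, slack_psnoc_some, ← card_eq_sum_ones,
    card_snocCompatible_some (mem_odci.mp hf)]
  ring

theorem card_odci_and_sum_slack (n : ℕ) :
    #(odci n) = Nat.fib (2 * n + 1) ∧ ∑ f ∈ odci n, slack f = Nat.fib (2 * n + 2) := by
  induction n with
  | zero =>
    have : odci 0 = univ := by ext f; simp [odci, isODCI_iff]
    simp [this, slack]
  | succ n ih =>
    have h3 : Nat.fib (2 * (n + 1) + 1) = Nat.fib (2 * n + 1) + Nat.fib (2 * n + 2) :=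
      Nat.fib_add_two
    have h4 : Nat.fib (2 * (n + 1) + 2) = Nat.fib (2 * n + 2) + Nat.fib (2 * (n + 1) + 1) :=
      Nat.fib_add_two
    rw [card_odci_succ, sum_slack_odci_succ, ih.1, ih.2, h4, h3]
    omega

end ODCI

/-- The order of `ODCI_n` is the Fibonacci number `F_{2n+1}`. -/
theorem ODCI_order (n : ℕ) :
    Nat.card {f : Fin n → Option (Fin n) //
        PInj f ∧ Contr f ∧ OrdPres f ∧ OrdDecr f} = Nat.fib (2 * n + 1) :=
  (ODCI.card_odci n).trans (ODCI.card_odci_and_sum_slack n).1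
end

section
/- For every natural number n, there is a bijection between OCI_n, the set of order-preserving partial injective contractions of X_n = {1,…,n}, and OCI_n⁺, the set of order-reversing partial injective contractions of X_n; in particular |OCI_n| = |OCI_n⁺|. Moreover, the bijection can be chosen so that it preserves height and is the identity on maps of height at most 1. -/
/-! Reflecting the codomain by `i ↦ n + 1 - i` turns order-preserving maps into order-reversing
ones and back, and it preserves injectivity, the contraction property and the height. Maps of
height at most `1` are both order-preserving and order-reversing, so the reflection is applied
only to maps of height at least `2`; this keeps it an involution, hence a bijection. -/

section

variable {n : ℕ}

def revCod (f : Fin n → Option (Fin n)) : Fin n → Option (Fin n) :=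
  fun x => (f x).map Fin.rev

theorem revCod_eq_some {f : Fin n → Option (Fin n)} {x a : Fin n} :
    revCod f x = some a ↔ f x = some a.rev := by
  simp only [revCod, Option.map_eq_some_iff]
  exact ⟨fun ⟨b, hb, hba⟩ => hba ▸ (Fin.rev_rev b).symm ▸ hb, fun h => ⟨a.rev, h, Fin.rev_rev a⟩⟩

theorem revCod_involutive : Function.Involutive (revCod (n := n)) := by
  intro f
  funext x
  cases h : f x <;> simp [revCod, h]

theorem abs_sub_rev (a b : Fin n) : |(a.rev.val : ℤ) - b.rev.val| = |(a.val : ℤ) - b.val| := by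
  rw [Fin.val_rev, Fin.val_rev, abs_sub_comm]
  congr 1
  omega

theorem pInj_revCod_iff {f : Fin n → Option (Fin n)} : PInj (revCod f) ↔ PInj f := by
  simp only [PInj, revCod_eq_some]
  exact forall₂_congr fun x y =>
    (Fin.rev_surjective.forall (p := fun a => f x = some a → f y = some a → x = y)).symm

theorem contr_revCod_iff {f : Fin n → Option (Fin n)} : Contr (revCod f) ↔ Contr f := by
  simp only [Contr, revCod_eq_some]
  refine forall₂_congr fun x y => ?_
  rw [Fin.rev_surjective.forall₂ (p := fun a b => f x = some a → f y = some b → _)]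
  simp only [abs_sub_rev]

theorem ordRev_revCod_iff {f : Fin n → Option (Fin n)} : OrdRev (revCod f) ↔ OrdPres f := by
  simp only [OrdRev, OrdPres, revCod_eq_some]
  refine forall₂_congr fun x y => ?_
  rw [Fin.rev_surjective.forall₂ (p := fun a b => f x = some a → f y = some b → x ≤ y → a ≤ b)]
  simp only [Fin.rev_le_rev]

theorem pim_revCod (f : Fin n → Option (Fin n)) : pim (revCod f) = (pim f).image Fin.rev := by
  ext b
  simp only [pim, Finset.mem_filter, Finset.mem_univ, true_and, Finset.mem_image, revCod_eq_some]
  exact ⟨fun h => ⟨b.rev, h, Fin.rev_rev b⟩, fun ⟨a, ha, hab⟩ => hab ▸ (Fin.rev_rev a).symm ▸ ha⟩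

theorem pheight_revCod (f : Fin n → Option (Fin n)) : pheight (revCod f) = pheight f := by
  rw [pheight, pim_revCod, Finset.card_image_of_injective _ Fin.rev_injective, pheight]

theorem eq_of_pheight_le_one {f : Fin n → Option (Fin n)} (hf : pheight f ≤ 1)
    {x y a b : Fin n} (hx : f x = some a) (hy : f y = some b) : a = b :=
  Finset.card_le_one.mp hf a (by simpa [pim] using ⟨x, hx⟩) b (by simpa [pim] using ⟨y, hy⟩)

theorem ordPres_of_pheight_le_one {f : Fin n → Option (Fin n)} (hf : pheight f ≤ 1) :
    OrdPres f :=
  fun _ _ _ _ hx hy _ => (eq_of_pheight_le_one hf hx hy).le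

theorem ordRev_of_pheight_le_one {f : Fin n → Option (Fin n)} (hf : pheight f ≤ 1) :
    OrdRev f :=
  fun _ _ _ _ hx hy _ => (eq_of_pheight_le_one hf hy hx).le

def twist (f : Fin n → Option (Fin n)) : Fin n → Option (Fin n) :=
  if pheight f ≤ 1 then f else revCod f

theorem pheight_twist (f : Fin n → Option (Fin n)) : pheight (twist f) = pheight f := by
  unfold twist
  split_ifs
  · rfl
  · exact pheight_revCod f

theorem twist_involutive : Function.Involutive (twist (n := n)) := by
  intro f
  by_cases hf : pheight f ≤ 1
  · simp only [twist, if_pos hf]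
  · simp only [twist, if_neg hf, pheight_revCod, revCod_involutive f]

theorem oci_iff_twist_ociPlus (f : Fin n → Option (Fin n)) :
    PInj f ∧ Contr f ∧ OrdPres f ↔ PInj (twist f) ∧ Contr (twist f) ∧ OrdRev (twist f) := by
  by_cases hf : pheight f ≤ 1
  · simp only [twist, if_pos hf, ordPres_of_pheight_le_one hf, ordRev_of_pheight_le_one hf]
  · simp only [twist, if_neg hf, pInj_revCod_iff, contr_revCod_iff, ordRev_revCod_iff]

end

/-- There is a bijection between `OCI_n` and `OCI_n⁺` (in particular they have the
same cardinality) which preserves height and is the identity on maps of height at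
most `1`. -/
theorem OCI_equiv_OCIplus (n : ℕ) :
    Nat.card {f : Fin n → Option (Fin n) // PInj f ∧ Contr f ∧ OrdPres f} =
      Nat.card {f : Fin n → Option (Fin n) // PInj f ∧ Contr f ∧ OrdRev f} ∧
    ∃ e : {f : Fin n → Option (Fin n) // PInj f ∧ Contr f ∧ OrdPres f} ≃
          {f : Fin n → Option (Fin n) // PInj f ∧ Contr f ∧ OrdRev f},
      (∀ f, pheight (e f).val = pheight f.val) ∧
      (∀ f, pheight f.val ≤ 1 → (e f).val = f.val) := by
  let e : {f : Fin n → Option (Fin n) // PInj f ∧ Contr f ∧ OrdPres f} ≃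
      {f : Fin n → Option (Fin n) // PInj f ∧ Contr f ∧ OrdRev f} :=
    (twist_involutive.toPerm _).subtypeEquiv oci_iff_twist_ociPlus
  exact ⟨Nat.card_congr e, e, fun f => pheight_twist f.val, fun f hf => if_pos hf⟩
end
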